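/- arXiv:2310.11452 — 8 statements merged into one kernel-verified Lean document; each statement's English description precedes it below -/
import Mathlib

section
/- Let G be a complete multipartite graph on n vertices whose largest part has size m. Then G is Hamiltonian if and only if m ≤ n/2. -/
/-!
A Hamiltonian cycle `v₀ v₁ … v_{n-1}` yields the permutation `vₖ ↦ vₖ₊₁` along edges. It maps
a part, an independent set, injectively into the complement of that part, so `m ≤ n - m`.

Conversely, list the vertices part by part, a largest part first, at positions `0, …, n - 1`,
and traverse the positions in the order `0, h, 1, h + 1, 2, …` with `h = ⌈n / 2⌉`. Cyclically
consecutive positions are `h` or `h - 1` apart, or are `n - 1` and `0`, so they never lie in a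
common part of size at most `n / 2`; the one exception, for `n = 2h`, would be a part of size
`h` filling a window `[j + 1, j + h]` with `0 < j + 1 < h`, and putting a largest part first
rules it out.
-/

open Function Fintype

namespace SimpleGraph

variable {α : Type*} {G : SimpleGraph α}

theorem cycleGraph_isContained_of_adj_add_one {n : ℕ} [NeZero n] {f : Fin n → α}
    (hf : Injective f) (hadj : ∀ k, G.Adj (f k) (f (k + 1))) : cycleGraph n ⊑ G := by
  refine ⟨⟨⟨f, fun {u v} huv => ?_⟩, hf⟩⟩
  have sub_eq_one {a b : Fin n} (h : (a - b).val = 1) : a = b + 1 := by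
    rw [← sub_eq_iff_eq_add']
    exact Fin.ext (by rw [h, Fin.val_one', Nat.mod_eq_of_lt (by omega)])
  rcases cycleGraph_adj'.mp huv with h | h
  · exact sub_eq_one h ▸ (hadj v).symm
  · exact sub_eq_one h ▸ hadj u

variable [Fintype α] [DecidableEq α]

theorem isHamiltonian_iff_cycleGraph_isContained (h3 : 3 ≤ card α) :
    G.IsHamiltonian ↔ cycleGraph (card α) ⊑ G := by
  simp [IsHamiltonian, cycleGraph_isContained_iff h3,
    Walk.isHamiltonianCycle_iff_isCycle_and_length_eq, show card α ≠ 1 by omega]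

theorem IsHamiltonian.exists_perm_forall_adj (hG : G.IsHamiltonian) (h3 : 3 ≤ card α) :
    ∃ σ : Equiv.Perm α, ∀ v, G.Adj v (σ v) := by
  obtain ⟨f⟩ := (isHamiltonian_iff_cycleGraph_isContained h3).mp hG
  have : NeZero (card α) := ⟨by omega⟩
  let e : Fin (card α) ≃ α :=
    .ofBijective f ((bijective_iff_injective_and_card f).mpr ⟨f.injective, by simp⟩)
  refine ⟨e.symm.trans ((Equiv.addRight 1).trans e), fun v => ?_⟩
  obtain ⟨k, rfl⟩ := e.surjective v
  have hk : (cycleGraph (card α)).Adj k (k + 1) := by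
    rw [cycleGraph_adj', add_sub_cancel_left, Fin.val_one', Nat.mod_eq_of_lt (by omega)]
    exact Or.inr rfl
  simpa [e] using f.toHom.map_adj hk

theorem two_mul_card_le_of_isIndepSet {σ : Equiv.Perm α} (hσ : ∀ v, G.Adj v (σ v))
    {s : Finset α} (hs : G.IsIndepSet s) : 2 * s.card ≤ card α := by
  have : s.card ≤ sᶜ.card := by
    refine Finset.card_le_card_of_injOn σ (fun v hv => ?_) σ.injective.injOn
    simp only [Finset.coe_compl, Set.mem_compl_iff, Finset.mem_coe]
    exact fun hσv => hs hv hσv (hσ v).ne (hσ v)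
  rw [Finset.card_compl] at this
  omega

theorem IsHamiltonian.two_mul_card_le_of_isIndepSet (hG : G.IsHamiltonian) (h3 : 3 ≤ card α)
    {s : Finset α} (hs : G.IsIndepSet s) : 2 * s.card ≤ card α :=
  let ⟨_, hσ⟩ := hG.exists_perm_forall_adj h3
  SimpleGraph.two_mul_card_le_of_isIndepSet hσ hs

theorem completeMultipartiteGraph.isIndepSet_part {ι : Type*} (V : ι → Type*) (i : ι)
    [Fintype (V i)] :
    (completeMultipartiteGraph V).IsIndepSet
      ((Finset.univ.map (Embedding.sigmaMk (β := V) i) : Finset (Σ i, V i)) : Set (Σ i, V i)) := by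
  intro x hx y hy _
  simp only [Finset.coe_map, Finset.coe_univ, Set.image_univ, Set.mem_range] at hx hy
  obtain ⟨u, rfl⟩ := hx
  obtain ⟨v, rfl⟩ := hy
  simp

end SimpleGraph

/-- In a listing of the vertices part by part, with a part of maximal size `m` first, the
positions `a` and `b` can only belong to the same part if `MayShareBlock m a b`. -/
def MayShareBlock (m a b : ℕ) : Prop := a < b + m ∧ b < a + m ∧ (a < m ↔ b < m)

theorem mayShareBlock_finSigmaFinEquiv {κ : ℕ} {a : Fin (κ + 1) → ℕ} (ha : ∀ k, a k ≤ a 0)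
    {x y : Σ k, Fin (a k)} (h : x.1 = y.1) :
    MayShareBlock (a 0) (finSigmaFinEquiv x) (finSigmaFinEquiv y) := by
  obtain ⟨k, i⟩ := x
  obtain ⟨k', j⟩ := y
  obtain rfl : k = k' := h
  have hi := i.isLt
  have hj := j.isLt
  have hk := ha k
  simp only [MayShareBlock, finSigmaFinEquiv_apply]
  set offset := ∑ l : Fin k, a (Fin.castLE k.isLt.le l)
  rcases Fin.eq_zero_or_eq_succ k with rfl | ⟨l, rfl⟩
  · have : offset = 0 := by simp [offset]
    omega
  · have : a 0 ≤ offset :=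
      Finset.single_le_sum (f := fun l : Fin _ => a (Fin.castLE _ l)) (fun _ _ => Nat.zero_le _)
        (Finset.mem_univ (0 : Fin (l.val + 1)))
    omega

theorem exists_equiv_fin_mayShareBlock {ι : Type*} [Fintype ι] (V : ι → Type*)
    [∀ i, Fintype (V i)] {m : ℕ} (hmax : ∀ i, card (V i) ≤ m) {i₀ : ι}
    (hi₀ : card (V i₀) = m) :
    ∃ pos : (Σ i, V i) ≃ Fin (card (Σ i, V i)),
      ∀ x y, x.1 = y.1 → MayShareBlock m (pos x) (pos y) := by
  have : Nonempty ι := ⟨i₀⟩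
  obtain ⟨κ, hκ⟩ : ∃ κ, card ι = κ + 1 := Nat.exists_eq_succ_of_ne_zero card_ne_zero
  let e₀ : ι ≃ Fin (κ + 1) := (equivFin ι).trans (finCongr hκ)
  let e : ι ≃ Fin (κ + 1) := e₀.trans (Equiv.swap (e₀ i₀) 0)
  have he : e.symm 0 = i₀ := by simp [e]
  let a k := card (V (e.symm k))
  have ha0 : a 0 = m := by simp only [a, he, hi₀]
  have hsum : ∑ k, a k = card (Σ i, V i) := by
    rw [card_sigma]
    exact e.symm.sum_comp fun i => card (V i)
  let s := (Equiv.sigmaCongrLeft' e).trans (Equiv.sigmaCongrRight fun k => equivFin (V (e.symm k)))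
  have hs : ∀ z, (s z).1 = e z.1 := fun _ => rfl
  refine ⟨s.trans (finSigmaFinEquiv.trans (finCongr hsum)), fun x y hxy => ?_⟩
  simpa [ha0] using mayShareBlock_finSigmaFinEquiv (a := a) (fun k => ha0.symm ▸ hmax _)
    (by rw [hs, hs, hxy] : (s x).1 = (s y).1)

def interleave (n t : ℕ) : ℕ := if Even t then t / 2 else (n + 1) / 2 + t / 2

theorem interleave_lt {n t : ℕ} (ht : t < n) : interleave n t < n := by
  unfold interleave
  split_ifs with h
  · omega
  · rw [Nat.not_even_iff] at h
    omega

theorem interleave_injOn (n : ℕ) : Set.InjOn (interleave n) (Set.Iio n) := by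
  intro s hs t ht hst
  simp only [interleave, Nat.even_iff, Set.mem_Iio] at hs ht hst
  split_ifs at hst <;> omega

noncomputable def interleaveEquiv (n : ℕ) : Fin n ≃ Fin n :=
  .ofBijective (fun t => ⟨interleave n t, interleave_lt t.isLt⟩) <|
    Finite.injective_iff_bijective.mp fun s t hst =>
      Fin.ext (interleave_injOn n s.isLt t.isLt (Fin.val_eq_of_eq hst))

theorem not_mayShareBlock_interleave {n m : ℕ} (h2m : 2 * m ≤ n) (h3 : 3 ≤ n) {t : ℕ}
    (ht : t < n) : ¬ MayShareBlock m (interleave n t) (interleave n ((t + 1) % n)) := by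
  rcases (show t + 1 < n ∨ t + 1 = n by omega) with hlt | heq
  · rw [Nat.mod_eq_of_lt hlt]
    simp only [MayShareBlock, interleave, Nat.even_iff]
    split_ifs <;> omega
  · rw [heq, Nat.mod_self]
    simp only [MayShareBlock, interleave, Nat.even_iff]
    split_ifs <;> omega

theorem not_mayShareBlock_interleaveEquiv {n m : ℕ} [NeZero n] (h2m : 2 * m ≤ n) (h3 : 3 ≤ n)
    (t : Fin n) : ¬ MayShareBlock m (interleaveEquiv n t) (interleaveEquiv n (t + 1)) := by
  have : ((t + 1 : Fin n) : ℕ) = (t + 1) % n := by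
    rw [Fin.val_add, Fin.val_one', Nat.add_mod_mod]
  simpa [interleaveEquiv, this] using not_mayShareBlock_interleave h2m h3 t.isLt

/-- A complete multipartite graph on `n ≥ 3` vertices whose largest part has
size `m` is Hamiltonian if and only if `m ≤ n/2`. -/
theorem completeMultipartite_hamiltonian_iff {ι : Type} [Fintype ι]
    (V : ι → Type) [∀ i, Fintype (V i)] [DecidableEq (Σ i, V i)] (n m : ℕ)
    (hn : n = Fintype.card (Σ i, V i)) (hn3 : 3 ≤ n)
    (hmax : ∀ i, Fintype.card (V i) ≤ m)
    (hex : ∃ i, Fintype.card (V i) = m) :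
    (SimpleGraph.completeMultipartiteGraph V).IsHamiltonian ↔ 2 * m ≤ n := by
  obtain ⟨i₀, hi₀⟩ := hex
  subst hn
  constructor
  · intro hG
    simpa [hi₀] using hG.two_mul_card_le_of_isIndepSet hn3
      (SimpleGraph.completeMultipartiteGraph.isIndepSet_part V i₀)
  · intro h2m
    have : NeZero (card (Σ i, V i)) := ⟨by omega⟩
    obtain ⟨pos, hpos⟩ := exists_equiv_fin_mayShareBlock V hmax hi₀
    let e := (interleaveEquiv _).trans pos.symm
    refine (SimpleGraph.isHamiltonian_iff_cycleGraph_isContained hn3).mpr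
      (SimpleGraph.cycleGraph_isContained_of_adj_add_one e.injective fun t hsame => ?_)
    exact not_mayShareBlock_interleaveEquiv h2m hn3 t (by simpa [e] using hpos _ _ hsame)
end

section
/- Let j ≥ 0, r ≥ 1, and let G be a K_{r+1}-free graph on n vertices containing a set J of j vertices each of degree at most d ≤ n-1 in G. Let H = G - J, and let i be the maximum number of pairwise vertex-disjoint copies of K_r in H. If n ≥ j + i·r, then the number of edges of G with at least one endpoint in J is at most ⌊(j/2)(n - j - i + d)⌋. -/
private def auxF {V : Type} [Fintype V] [DecidableEq V] (G : SimpleGraph V)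
    [DecidableRel G.Adj] (J : Finset V) (v : V) (e : Sym2 V) : ℕ :=
  (if v ∈ e then 1 else 0) +
  (if ∃ w ∈ G.neighborFinset v \ J, e = s(v, w) then 1 else 0)

/-- Lemma 4.5: if `G` is `K_{r+1}`-free on `n` vertices, `J` is a set of `j` vertices of
degree at most `d ≤ n-1`, and `i` is the maximum number of pairwise disjoint copies of
`K_r` in `H = G - J`, then assuming `n ≥ j + i·r`, the number of edges of `G` meeting `J`
is at most `⌊(j/2)(n - j - i + d)⌋`. -/
theorem edges_meeting_low_degree_set_bound {V : Type} [Fintype V] [DecidableEq V]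
    (G : SimpleGraph V) [DecidableRel G.Adj] (n r j i d : ℕ)
    (hn : n = Fintype.card V) (hr : 1 ≤ r)
    (hfree : G.CliqueFree (r + 1))
    (J : Finset V) (hJcard : J.card = j)
    (hd : d ≤ n - 1) (hdeg : ∀ v ∈ J, G.degree v ≤ d)
    (hi_ex : ∃ f : Fin i → Finset V,
      (∀ a, G.IsNClique r (f a) ∧ ∀ v ∈ f a, v ∉ J) ∧
      ∀ a b, a ≠ b → Disjoint (f a) (f b))
    (hi_max : ∀ m : ℕ, (∃ f : Fin m → Finset V,
      (∀ a, G.IsNClique r (f a) ∧ ∀ v ∈ f a, v ∉ J) ∧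
      ∀ a b, a ≠ b → Disjoint (f a) (f b)) → m ≤ i)
    (hnji : j + i * r ≤ n) :
    (G.edgeFinset.filter fun e => ∃ v ∈ J, v ∈ e).card ≤ (j * (n - j - i + d)) / 2 := by
  obtain ⟨f, hfc, hfd⟩ := hi_ex
  set S := G.edgeFinset.filter (fun e => ∃ v ∈ J, v ∈ e) with hS
  set out : V → ℕ := fun v => (G.neighborFinset v \ J).card with hout_def
  -- key per-vertex bound on neighbors outside J
  have hout : ∀ v ∈ J, out v ≤ n - j - i := by
    intro v hv
    have hchoice : ∀ a : Fin i, ∃ w ∈ f a, ¬ G.Adj v w := by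
      intro a
      by_contra hcon
      push_neg at hcon
      exact hfree _ ((hfc a).1.insert hcon)
    choose w hw1 hw2 using hchoice
    have hwinj : Function.Injective w := by
      intro a b hab
      by_contra hne
      exact Finset.disjoint_left.1 (hfd a b hne) (hw1 a) (hab ▸ hw1 b)
    set W : Finset V := Finset.univ.image w with hW
    have hWcard : W.card = i := by
      rw [hW, Finset.card_image_of_injective _ hwinj, Finset.card_univ, Fintype.card_fin]
    have hWsub : W ⊆ Finset.univ \ J := by
      intro x hx
      rw [hW] at hx
      obtain ⟨a, -, rfl⟩ := Finset.mem_image.1 hx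
      exact Finset.mem_sdiff.2 ⟨Finset.mem_univ _, (hfc a).2 _ (hw1 a)⟩
    have hsub : G.neighborFinset v \ J ⊆ (Finset.univ \ J) \ W := by
      intro x hx
      rw [Finset.mem_sdiff] at hx
      refine Finset.mem_sdiff.2 ⟨Finset.mem_sdiff.2 ⟨Finset.mem_univ _, hx.2⟩, ?_⟩
      intro hxW
      rw [hW] at hxW
      obtain ⟨a, -, rfl⟩ := Finset.mem_image.1 hxW
      exact hw2 a ((G.mem_neighborFinset v _).1 hx.1)
    have hcard1 : (Finset.univ \ J).card = n - j := by
      rw [Finset.card_sdiff_of_subset (Finset.subset_univ _), Finset.card_univ, ← hn, hJcard]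
    calc out v ≤ ((Finset.univ \ J) \ W).card := Finset.card_le_card hsub
      _ = n - j - i := by rw [Finset.card_sdiff_of_subset hWsub, hcard1, hWcard]
  -- weight function for double counting
  set F : V → Sym2 V → ℕ := auxF G J with hF
  -- per-vertex sum of weights
  have h1 : ∀ v ∈ J, ∑ e ∈ G.edgeFinset, F v e = G.degree v + out v := by
    intro v hv
    rw [hF]; unfold auxF
    rw [Finset.sum_add_distrib]
    congr 1
    · rw [Finset.sum_boole]
      push_cast
      rw [← SimpleGraph.incidenceFinset_eq_filter, SimpleGraph.card_incidenceFinset_eq_degree]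
    · rw [Finset.sum_boole]
      push_cast
      have himg : G.edgeFinset.filter (fun e => ∃ w ∈ G.neighborFinset v \ J, e = s(v, w))
          = (G.neighborFinset v \ J).image (fun w => s(v, w)) := by
        ext e
        simp only [Finset.mem_filter, Finset.mem_image]
        constructor
        · rintro ⟨-, w, hw, rfl⟩
          exact ⟨w, hw, rfl⟩
        · rintro ⟨w, hw, rfl⟩
          refine ⟨?_, w, hw, rfl⟩
          rw [SimpleGraph.mem_edgeFinset, SimpleGraph.mem_edgeSet]
          exact (G.mem_neighborFinset v w).1 (Finset.mem_sdiff.1 hw).1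
      rw [himg, Finset.card_image_of_injective]
      intro a b hab
      exact (Sym2.congr_right).1 hab
  -- each edge meeting J gets weight at least 2
  have haux : ∀ x y, G.Adj x y → x ∈ J → y ∉ J → 2 ≤ ∑ v ∈ J, F v s(x, y) := by
    intro x y hxy hxJ hyJ
    have hFx : F x s(x, y) = 2 := by
      rw [hF]; unfold auxF
      rw [if_pos (Sym2.mem_mk_left x y), if_pos ⟨y, Finset.mem_sdiff.2
        ⟨(G.mem_neighborFinset x y).2 hxy, hyJ⟩, rfl⟩]
    calc 2 = F x s(x, y) := hFx.symm
      _ ≤ ∑ v ∈ J, F v s(x, y) := Finset.single_le_sum (f := fun v => F v s(x, y)) (fun i _ => Nat.zero_le _) hxJ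
  have h2 : ∀ e ∈ S, 2 ≤ ∑ v ∈ J, F v e := by
    refine Sym2.ind ?_
    intro a b he
    rw [hS, Finset.mem_filter, SimpleGraph.mem_edgeFinset, SimpleGraph.mem_edgeSet] at he
    obtain ⟨hab, u, huJ, hue⟩ := he
    by_cases haJ : a ∈ J
    · by_cases hbJ : b ∈ J
      · have hsub : {a, b} ⊆ J := by
          intro x hx
          rcases Finset.mem_insert.1 hx with rfl | hx
          · exact haJ
          · exact Finset.mem_singleton.1 hx ▸ hbJ
        calc 2 = 1 + 1 := rfl
          _ ≤ F a s(a, b) + F b s(a, b) := by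
              refine Nat.add_le_add ?_ ?_
              · rw [hF]; unfold auxF
                rw [if_pos (Sym2.mem_mk_left a b)]
                omega
              · rw [hF]; unfold auxF
                rw [if_pos (Sym2.mem_mk_right a b)]
                omega
          _ = ∑ v ∈ ({a, b} : Finset V), F v s(a, b) := (Finset.sum_pair (f := fun v => F v s(a, b)) hab.ne).symm
          _ ≤ ∑ v ∈ J, F v s(a, b) :=
              Finset.sum_le_sum_of_subset (f := fun v => F v s(a, b)) hsub
      · exact haux a b hab haJ hbJ
    · by_cases hbJ : b ∈ J
      · rw [Sym2.eq_swap]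
        exact haux b a hab.symm hbJ haJ
      · rcases Sym2.mem_iff.1 hue with rfl | rfl
        · exact absurd huJ haJ
        · exact absurd huJ hbJ
  -- double counting
  have key : 2 * S.card ≤ ∑ v ∈ J, (G.degree v + out v) := by
    calc 2 * S.card = ∑ _e ∈ S, 2 := by rw [Finset.sum_const, smul_eq_mul, mul_comm]
      _ ≤ ∑ e ∈ S, ∑ v ∈ J, F v e := Finset.sum_le_sum h2
      _ ≤ ∑ e ∈ G.edgeFinset, ∑ v ∈ J, F v e := by
          refine Finset.sum_le_sum_of_subset ?_
          rw [hS]; exact Finset.filter_subset _ _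
      _ = ∑ v ∈ J, ∑ e ∈ G.edgeFinset, F v e := Finset.sum_comm
      _ = ∑ v ∈ J, (G.degree v + out v) := Finset.sum_congr rfl h1
  have hb : ∑ v ∈ J, (G.degree v + out v) ≤ j * (n - j - i + d) := by
    calc ∑ v ∈ J, (G.degree v + out v) ≤ ∑ _v ∈ J, (d + (n - j - i)) :=
        Finset.sum_le_sum fun v hv => Nat.add_le_add (hdeg v hv) (hout v hv)
      _ = j * (n - j - i + d) := by
          rw [Finset.sum_const, hJcard, smul_eq_mul, add_comm d]
  rw [Nat.le_div_iff_mul_le (by norm_num : 0 < 2)]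
  omega
end

section
/- Let r ≥ 3, k ≥ 1, and n ≥ 8 + k + (2k+12)/(r-2). Let G be the graph obtained from the Turán graph T_r(n-1) by adding one new vertex v of degree k+1. If P is a path in G of length at most k+4 that contains v but not as an end vertex, then P is contained in a Hamiltonian cycle of G. -/
/-!
The Turán graph is complete multipartite, its parts being the residue classes mod `r`. Delete
the interior vertices of `P` (among them `v`): the set `S` left over contains the ends `a, b`
of `P`, has at least `n - k - 5` vertices, and meets every part in at most `(n - 2) / r + 1`
of them, less than half of `#S`. In a complete multipartite graph two vertices of a set `S` are
joined by a path through exactly `S` as soon as no part is too large for an alternating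
ordering (`ColorBalanced`); the path is built greedily, stepping into a part that would
otherwise become too large. Closing `P` by such a path from `b` to `a` gives the cycle.
-/

open SimpleGraph Finset

section ColorBalanced

variable {V α : Type*} [DecidableEq V] [DecidableEq α]

lemma exists_mem_ne_of_card_filter_gt {p : V → Prop} [DecidablePred p] {T : Finset V} (b : V)
    (h : (if p b then 1 else 0) < #{u ∈ T | p u}) : ∃ a ∈ T, a ≠ b ∧ p a := by
  by_contra! hT
  have hsub : {u ∈ T | p u} ⊆ ({b} : Finset V).filter p := by
    intro u hu
    rw [mem_filter] at hu ⊢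
    exact ⟨mem_singleton.2 (by_contra fun hub => hT u hu.1 hub hu.2), hu.2⟩
  have := card_le_card hsub
  rw [filter_singleton] at this
  split_ifs at h this <;> simp only [card_singleton, card_empty] at this <;> omega

/-- The condition for `S` to admit an ordering from `a` to `b` in which consecutive vertices
get different colours: a colour class can fill at most every other position. -/
def ColorBalanced (f : V → α) (S : Finset V) (a b : V) : Prop :=
  ∀ c, 2 * #{u ∈ S | f u = c} < #S + (if f a = c then 1 else 0) + (if f b = c then 1 else 0)

variable {f : V → α}

lemma eq_of_two_mul_card_filter_eq {T : Finset V} {b : V} (hb : b ∈ T) {c₁ c₂ : α}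
    (h₁ : 2 * #{u ∈ T | f u = c₁} = #T + if f b = c₁ then 1 else 0)
    (h₂ : 2 * #{u ∈ T | f u = c₂} = #T + if f b = c₂ then 1 else 0) : c₁ = c₂ := by
  by_contra hne
  have hunion : #{u ∈ T | f u = c₁} + #{u ∈ T | f u = c₂} =
      #{u ∈ T | f u = c₁ ∨ f u = c₂} := by
    rw [filter_or, card_union_of_disjoint
      (disjoint_filter.2 fun u _ (h₁ : f u = c₁) (h₂ : f u = c₂) => hne (h₁ ▸ h₂))]
  have hle := card_filter_le T (fun u => f u = c₁ ∨ f u = c₂)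
  by_cases hb' : f b = c₁ ∨ f b = c₂
  · rcases hb' with rfl | rfl
    · rw [if_pos rfl] at h₁; rw [if_neg hne] at h₂; omega
    · rw [if_pos rfl] at h₂; rw [if_neg (Ne.symm hne)] at h₁; omega
  · have hlt :=
      card_lt_card (filter_ssubset (p := fun u => f u = c₁ ∨ f u = c₂) |>.2 ⟨b, hb, hb'⟩)
    push Not at hb'
    rw [if_neg hb'.1] at h₁; rw [if_neg hb'.2] at h₂; omega

lemma ColorBalanced.two_mul_card_filter_erase_le {S : Finset V} {a b : V}
    (h : ColorBalanced f S a b) (ha : a ∈ S) (c : α) :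
    2 * #{u ∈ S.erase a | f u = c} + (if f a = c then 1 else 0) ≤
      #(S.erase a) + (if f b = c then 1 else 0) := by
  have hS := card_erase_of_mem ha
  have hpos := card_pos.2 ⟨a, ha⟩
  have hc : #{u ∈ S.erase a | f u = c} + (if f a = c then 1 else 0) = #{u ∈ S | f u = c} := by
    rw [filter_erase]
    split_ifs with hfa
    · have hmem : a ∈ {u ∈ S | f u = c} := mem_filter.2 ⟨ha, hfa⟩
      rw [card_erase_of_mem hmem, Nat.sub_add_cancel (card_pos.2 ⟨a, hmem⟩)]
    · rw [erase_eq_of_notMem fun (hmem : a ∈ {u ∈ S | f u = c}) => hfa (mem_filter.1 hmem).2,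
        add_zero]
  have := h c
  omega

lemma exists_colorBalanced_of_two_mul_card_filter_le {T : Finset V} {b : V} {x : α}
    (hb : b ∈ T) (hT : 2 ≤ #T)
    (hle : ∀ c, 2 * #{u ∈ T | f u = c} + (if x = c then 1 else 0) ≤
      #T + (if f b = c then 1 else 0)) :
    ∃ a ∈ T, a ≠ b ∧ f a ≠ x ∧ ColorBalanced f T a b := by
  -- A colour is tight when its class is as large as `hle` allows; then `a` must take it.
  suffices ∃ a ∈ T, a ≠ b ∧ f a ≠ x ∧
      ∀ c, 2 * #{u ∈ T | f u = c} = #T + (if f b = c then 1 else 0) → f a = c by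
    obtain ⟨a, ha, hab, hax, htight⟩ := this
    refine ⟨a, ha, hab, hax, fun c => ?_⟩
    have hc := hle c
    by_cases htc : 2 * #{u ∈ T | f u = c} = #T + (if f b = c then 1 else 0)
    · rw [if_pos (htight c htc)]
      split_ifs at hc <;> omega
    · split_ifs at hc htc ⊢ <;> omega
  by_cases htight : ∃ c, 2 * #{u ∈ T | f u = c} = #T + (if f b = c then 1 else 0)
  · obtain ⟨c, hc⟩ := htight
    obtain ⟨a, ha, hab, rfl⟩ := exists_mem_ne_of_card_filter_gt (T := T) (p := (f · = c)) b
      (by by_cases hbc : f b = c <;> simp only [hbc, if_true, if_false] at hc ⊢ <;> omega)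
    refine ⟨a, ha, hab, fun hax => ?_, fun c' hc' => eq_of_two_mul_card_filter_eq hb hc hc'⟩
    have := hle (f a)
    rw [if_pos hax.symm] at this
    omega
  · push Not at htight
    have hcompl := card_filter_add_card_filter_not (s := T) (fun u => f u = x)
    have hx := hle x
    rw [if_pos rfl] at hx
    obtain ⟨a, ha, hab, hax⟩ := exists_mem_ne_of_card_filter_gt (T := T)
      (p := fun u => ¬f u = x) b (by split_ifs at hx ⊢ <;> omega)
    exact ⟨a, ha, hab, hax, fun c hc => absurd hc (htight c)⟩

lemma ColorBalanced.exists_erase {S : Finset V} {a b : V} (h : ColorBalanced f S a b)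
    (ha : a ∈ S) (hb : b ∈ S) (hab : a ≠ b) (hS : 3 ≤ #S) :
    ∃ a' ∈ S.erase a, a' ≠ b ∧ f a' ≠ f a ∧ ColorBalanced f (S.erase a) a' b :=
  exists_colorBalanced_of_two_mul_card_filter_le (mem_erase.2 ⟨hab.symm, hb⟩)
    (by rw [card_erase_of_mem ha]; omega) (h.two_mul_card_filter_erase_le ha)

theorem exists_isPath_support_eq_of_colorBalanced (G : SimpleGraph V) {S : Finset V} {a b : V}
    (hadj : ∀ u ∈ S, ∀ w ∈ S, f u ≠ f w → G.Adj u w) (ha : a ∈ S) (hb : b ∈ S)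
    (hab : a ≠ b) (h : ColorBalanced f S a b) :
    ∃ p : G.Walk a b, p.IsPath ∧ ∀ u, u ∈ p.support ↔ u ∈ S := by
  induction hS : #S generalizing S a with
  | zero => simp_all
  | succ m ih =>
    by_cases h3 : 3 ≤ #S
    · obtain ⟨a', ha', ha'b, hfa', h'⟩ := h.exists_erase ha hb hab h3
      obtain ⟨p, hp, hpS⟩ := ih (fun u hu w hw => hadj u (mem_of_mem_erase hu) w
        (mem_of_mem_erase hw)) ha' (mem_erase.2 ⟨hab.symm, hb⟩) ha'b h'
        (by rw [card_erase_of_mem ha, hS]; rfl)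
      refine ⟨.cons (hadj a ha a' (mem_of_mem_erase ha') (Ne.symm hfa')) p, ?_, fun u => ?_⟩
      · exact hp.cons fun haS => (mem_erase.1 ((hpS a).1 haS)).1 rfl
      · rw [Walk.support_cons, List.mem_cons, hpS, mem_erase]
        by_cases hua : u = a <;> simp [hua, ha]
    · have hSab : S = {a, b} := (eq_of_subset_of_card_le
        (insert_subset ha (singleton_subset_iff.2 hb)) (by rw [card_pair hab]; omega)).symm
      subst hSab
      have hfab : f a ≠ f b := fun hfab => by
        have := h (f a)
        simp [filter_insert, filter_singleton, hfab, hab] at this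
      refine ⟨.cons (hadj a ha b hb hfab) .nil, by simp [hab], fun u => by simp⟩

end ColorBalanced

namespace SimpleGraph.Walk

variable {V : Type*} {G : SimpleGraph V} {a b : V}

lemma one_lt_length_of_mem_support {v : V} {p : G.Walk a b} (hv : v ∈ p.support)
    (hva : v ≠ a) (hvb : v ≠ b) : 1 < p.length := by
  rcases p with _ | ⟨_, _ | ⟨_, _⟩⟩ <;> simp_all

lemma IsPath.ne_of_length_pos {p : G.Walk a b} (hp : p.IsPath) (h : 0 < p.length) : a ≠ b := by
  rintro rfl
  exact h.ne' (isPath_iff_nil.1 hp).length_eq_zero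

lemma IsPath.start_notMem_support_tail {p : G.Walk a b} (hp : p.IsPath) : a ∉ p.support.tail :=
  (List.nodup_cons.1 (p.cons_tail_support ▸ hp.support_nodup)).1

theorem IsPath.isHamiltonianCycle_append [DecidableEq V] {p : G.Walk a b} {q : G.Walk b a}
    (hp : p.IsPath) (hq : q.IsPath) (hlen : 1 < p.length)
    (hq_support : ∀ u, u ∈ q.support ↔ (u ∈ p.support → u = a ∨ u = b)) :
    (p.append q).IsHamiltonianCycle := by
  have hab := hp.ne_of_length_pos (by omega)
  have hdisj : p.support.tail.Disjoint q.support.tail := fun u hup huq => by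
    rcases (hq_support u).1 (List.mem_of_mem_tail huq) (List.mem_of_mem_tail hup) with rfl | rfl
    exacts [hp.start_notMem_support_tail hup, hq.start_notMem_support_tail huq]
  have hcycle := hp.isCycle_append hq hdisj (Or.inl hlen)
  have hnodup := (isCycle_def _).1 hcycle |>.2.2
  refine isHamiltonianCycle_iff_isCycle_and_support_count_tail_eq_one.2
    ⟨hcycle, fun u => List.count_eq_one_of_mem hnodup ?_⟩
  rw [mem_tail_support_append_iff]
  by_cases hup : u ∈ p.support
  · rw [mem_support_iff] at hup
    rcases hup with rfl | hup
    exacts [Or.inr (end_mem_tail_support_of_ne hab.symm q), Or.inl hup]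
  · have huq := (hq_support u).2 fun h => absurd h hup
    rw [mem_support_iff] at huq
    rcases huq with rfl | huq
    exacts [absurd p.end_mem_support hup, Or.inr huq]

end SimpleGraph.Walk

lemma card_filter_range_mod_eq_le (m r c : ℕ) :
    #{i ∈ range m | i % r = c} ≤ (m - 1) / r + 1 :=
  calc #{i ∈ range m | i % r = c}
      ≤ #(range ((m - 1) / r + 1)) := by
        refine card_le_card_of_injOn (· / r) (fun i hi => ?_) fun i hi j hj hij => ?_
        · simp only [coe_filter, mem_range, Set.mem_ofPred_eq] at hi
          simpa [Nat.lt_succ_iff] using Nat.div_le_div_right (c := r) (Nat.le_sub_one_of_lt hi.1)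
        · simp only [coe_filter, mem_range, Set.mem_ofPred_eq] at hi hj
          exact Nat.ext_div_mod hij (hi.2.trans hj.2.symm)
    _ = (m - 1) / r + 1 := card_range _

lemma card_filter_mod_eq_le_of_injOn {V : Type*} {idx : V → ℕ} {s : Set V} {m : ℕ}
    (hinj : s.InjOn idx) (hlt : ∀ u ∈ s, idx u < m) {T : Finset V} (hT : ↑T ⊆ s)
    (r c : ℕ) :
    #{u ∈ T | idx u % r = c} ≤ (m - 1) / r + 1 :=
  (card_le_card_of_injOn idx (fun u hu => by
      simp only [coe_filter, Set.mem_ofPred_eq] at hu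
      simpa using ⟨hlt u (hT hu.1), hu.2⟩)
    (hinj.mono fun u hu => hT (mem_filter.1 hu).1)).trans (card_filter_range_mod_eq_le m r c)

theorem exists_index_of_iso_turanGraph {V : Type*} {G : SimpleGraph V} {s : Set V} {m r : ℕ}
    (e : G.induce s ≃g turanGraph m r) :
    ∃ idx : V → ℕ, s.InjOn idx ∧ (∀ u ∈ s, idx u < m) ∧
      ∀ u ∈ s, ∀ w ∈ s, (G.Adj u w ↔ idx u % r ≠ idx w % r) := by
  classical
  refine ⟨fun u => if hu : u ∈ s then e ⟨u, hu⟩ else 0, fun u hu w hw h => ?_,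
    fun u hu => ?_, fun u hu w hw => ?_⟩
  · simp only [dif_pos hu, dif_pos hw] at h
    simpa using e.injective (Fin.ext h)
  · simp [dif_pos hu]
  · simp only [dif_pos hu, dif_pos hw]
    exact (e.map_adj_iff (v := ⟨u, hu⟩) (w := ⟨w, hw⟩)).symm

lemma two_mul_sub_two_div_add_le {n r k : ℕ} (hr : 3 ≤ r)
    (hn : (n : ℝ) ≥ 8 + k + (2 * k + 12) / ((r : ℝ) - 2)) :
    2 * ((n - 2) / r) + k + 8 ≤ n := by
  have hr2 : (0 : ℝ) < r - 2 := by
    have : (3 : ℝ) ≤ r := by exact_mod_cast hr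
    linarith
  have hfrac : 0 ≤ (2 * (k : ℝ) + 12) / (r - 2) := by positivity
  have hn2 : 2 ≤ n := by exact_mod_cast (show (2 : ℝ) ≤ n by linarith)
  have hmul : 2 * (k : ℝ) + 12 ≤ (n - 8 - k) * (r - 2) := by
    rw [← div_le_iff₀ hr2]
    linarith
  have hkey : (k + 8) * r + 2 * n ≤ n * r + 4 := by
    have : ((k : ℝ) + 8) * r + 2 * n ≤ n * r + 4 := by nlinarith
    exact_mod_cast this
  have hdiv : (n - 2) / r * r ≤ n - 2 := Nat.div_mul_le_self _ _
  refine Nat.le_of_mul_le_mul_right ?_ (by omega : 0 < r)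
  zify [hn2] at hdiv ⊢
  nlinarith

theorem path_through_exceptional_vertex_in_hamiltonian_cycle_general
    {V : Type} [Fintype V] [DecidableEq V]
    (G : SimpleGraph V) (n r k : ℕ)
    (hr : 3 ≤ r)
    (hn : (n : ℝ) ≥ 8 + k + (2 * k + 12) / ((r : ℝ) - 2))
    (hcard : Fintype.card V = n)
    (v : V)
    (hiso : Nonempty ((G.induce ({v}ᶜ : Set V)) ≃g SimpleGraph.turanGraph (n - 1) r))
    (a b : V) (P : G.Walk a b) (hP : P.IsPath) (hlen : P.length ≤ k + 4)
    (hv : v ∈ P.support) (hva : v ≠ a) (hvb : v ≠ b) :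
    ∃ (c : V) (C : G.Walk c c), C.IsHamiltonianCycle ∧ ∀ e ∈ P.edges, e ∈ C.edges := by
  obtain ⟨idx, hinj, hlt, hadj⟩ := exists_index_of_iso_turanGraph hiso.some
  have hPlen := Walk.one_lt_length_of_mem_support hv hva hvb
  have hab := hP.ne_of_length_pos (by omega)
  set S : Finset V := {u | u ∈ P.support → u = a ∨ u = b}
  have hSv : ↑S ⊆ ({v}ᶜ : Set V) := fun u hu huv => by
    subst huv
    rcases (mem_filter.1 hu).2 hv with h | h
    exacts [hva h, hvb h]
  have hS : n ≤ #S + (k + 5) :=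
    calc n = #P.support.toFinsetᶜ + #P.support.toFinset := by rw [card_compl_add_card, hcard]
      _ ≤ #S + (k + 5) := add_le_add
          (card_le_card fun u hu => mem_filter.2
            ⟨mem_univ u, fun h => absurd (List.mem_toFinset.2 h) (mem_compl.1 hu)⟩)
          (P.support.toFinset_card_le.trans (by rw [Walk.length_support]; omega))
  have hbal : ColorBalanced (idx · % r) S b a := fun c => by
    have hclass : #{u ∈ S | idx u % r = c} ≤ (n - 2) / r + 1 :=
      card_filter_mod_eq_le_of_injOn hinj hlt hSv r c
    have := two_mul_sub_two_div_add_le hr hn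
    beta_reduce
    omega
  obtain ⟨M, hM, hMS⟩ := exists_isPath_support_eq_of_colorBalanced G
    (fun u hu w hw => (hadj u (hSv hu) w (hSv hw)).2) (by simp [S]) (by simp [S]) hab.symm hbal
  refine ⟨a, P.append M, hP.isHamiltonianCycle_append hM hPlen fun u => by simp [hMS, S], ?_⟩
  intro e he
  rw [Walk.edges_append]
  exact List.mem_append_left _ he

/-- Lemma 3.2: Let `r ≥ 3`, `k ≥ 1`, `n ≥ 8 + k + (2k+12)/(r-2)`, and let `G` be the
Turán graph `T_r(n-1)` plus one new vertex `v` of degree `k+1`.  Any path of length at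
most `k+4` containing `v` not as an end vertex extends to a Hamiltonian cycle of `G`. -/
theorem path_through_exceptional_vertex_in_hamiltonian_cycle
    {V : Type} [Fintype V] [DecidableEq V]
    (G : SimpleGraph V) [DecidableRel G.Adj] (n r k : ℕ)
    (hr : 3 ≤ r) (hk : 1 ≤ k)
    (hn : (n : ℝ) ≥ 8 + k + (2 * k + 12) / ((r : ℝ) - 2))
    (hcard : Fintype.card V = n)
    (v : V) (hdeg : G.degree v = k + 1)
    (hiso : Nonempty ((G.induce ({v}ᶜ : Set V)) ≃g SimpleGraph.turanGraph (n - 1) r))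
    (a b : V) (P : G.Walk a b) (hP : P.IsPath) (hlen : P.length ≤ k + 4)
    (hv : v ∈ P.support) (hva : v ≠ a) (hvb : v ≠ b) :
    ∃ (c : V) (C : G.Walk c c), C.IsHamiltonianCycle ∧ ∀ e ∈ P.edges, e ∈ C.edges :=
  path_through_exceptional_vertex_in_hamiltonian_cycle_general G n r k hr hn hcard v hiso a b P hP
    hlen hv hva hvb
end

section
/- Let ℓ ≥ -1, r ≥ 8, and n ≥ 2ℓ+9 be integers. Let G be an n-vertex K_{r+1}-free graph with degree sequence d_1 ≤ ⋯ ≤ d_n. If there is an integer j with 1 ≤ j ≤ (n-1-ℓ)/2 such that d_j ≤ j + ℓ, then e(G) ≤ e(T_r(n-1)) + ℓ + 1. -/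
/-!
Deleting the `j` vertices of degree at most `j + ℓ` removes at most `j (j + ℓ)` edges and leaves
a `K_{r+1}`-free graph on `n - j` vertices, which by Turán's theorem has at most `t_r(n - j)` edges.
Adding a vertex to `T_r(m)` gains `m - ⌊m / r⌋ ≥ 7m/8` edges when `r ≥ 8`, so summing these gains
shows `t_r(n - 1) - t_r(n - j) ≥ (j - 1)(j + ℓ + 1) = j (j + ℓ) - (ℓ + 1)` whenever
`2j ≤ n - 1 - ℓ` and `n ≥ 2ℓ + 9`.
-/

open Finset

namespace SimpleGraph

section

variable {V : Type*} [Fintype V]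

theorem CliqueFree.card_edgeFinset_le_turanGraph {G : SimpleGraph V} [DecidableRel G.Adj] {r : ℕ}
    (hG : G.CliqueFree (r + 1)) :
    #G.edgeFinset ≤ #(turanGraph (Fintype.card V) r).edgeFinset :=
  card_edgeFinset_turanGraph ▸ hG.card_edgeFinset_le

theorem card_edgeFinset_le_card_edgeFinset_induce_compl_add_sum_degree [DecidableEq V]
    (G : SimpleGraph V) [DecidableRel G.Adj] (s : Finset V) :
    #G.edgeFinset ≤ #(G.induce (↑s)ᶜ).edgeFinset + ∑ v ∈ s, G.degree v := by
  have hcover : G.edgeFinset ⊆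
      (G.edgeFinset ∩ ((↑s)ᶜ : Set V).toFinset.sym2) ∪ s.biUnion (G.incidenceFinset ·) := by
    intro e he
    by_cases hs : ∃ v ∈ e, v ∈ s
    · obtain ⟨v, hve, hvs⟩ := hs
      exact mem_union_right _ <| mem_biUnion.2
        ⟨v, hvs, (mem_incidenceFinset _ _ _).2 ⟨mem_edgeFinset.1 he, hve⟩⟩
    · push Not at hs
      exact mem_union_left _ (mem_inter.2 ⟨he, mem_sym2_iff.2 fun v hv ↦ by simpa using hs v hv⟩)
  calc #G.edgeFinset
      ≤ #(G.edgeFinset ∩ ((↑s)ᶜ : Set V).toFinset.sym2) + #(s.biUnion (G.incidenceFinset ·)) :=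
        (card_le_card hcover).trans (card_union_le _ _)
    _ ≤ #(G.induce (↑s)ᶜ).edgeFinset + ∑ v ∈ s, G.degree v := by
        rw [← map_edgeFinset_induce, card_map]
        gcongr
        exact card_biUnion_le.trans_eq (by simp only [card_incidenceFinset_eq_degree])

end

theorem turanGraph_map_castSucc_le (m r : ℕ) :
    (turanGraph m r).map Fin.castSuccEmb ≤
      (turanGraph (m + 1) r).deleteIncidenceSet (Fin.last m) := by
  rintro _ _ ⟨-, a, b, hab, rfl, rfl⟩
  simp only [deleteIncidenceSet_adj, turanGraph_adj] at hab ⊢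
  exact ⟨hab, Fin.castSucc_ne_last a, Fin.castSucc_ne_last b⟩

theorem sub_div_le_degree_turanGraph_last (m r : ℕ) :
    m - m / r ≤ (turanGraph (m + 1) r).degree (Fin.last m) := by
  have hnonadj : #{w | ¬(turanGraph (m + 1) r).Adj (Fin.last m) w} ≤ m / r + 1 := by
    -- vertices in the part of `Fin.last m` are determined by their quotient by `r`
    calc #{w | ¬(turanGraph (m + 1) r).Adj (Fin.last m) w}
        ≤ #(range (m / r + 1)) := card_le_card_of_injOn (fun w ↦ (w : ℕ) / r) ?_ ?_
      _ = m / r + 1 := card_range _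
    · intro w _
      simpa [Nat.lt_succ_iff] using Nat.div_le_div_right (Nat.lt_succ_iff.1 w.2)
    · intro w₁ hw₁ w₂ hw₂ hdiv
      simp only [coe_filter, mem_univ, true_and, Set.mem_ofPred_eq, turanGraph_adj, not_not,
        Fin.val_last] at hw₁ hw₂
      refine Fin.ext ?_
      rw [← Nat.div_add_mod (w₁ : ℕ) r, ← Nat.div_add_mod (w₂ : ℕ) r]
      simp_all
  have hsplit := card_filter_add_card_filter_not
    (s := univ) ((turanGraph (m + 1) r).Adj (Fin.last m))
  rw [← neighborFinset_eq_filter, card_neighborFinset_eq_degree, card_univ,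
    Fintype.card_fin] at hsplit
  omega

theorem card_edgeFinset_turanGraph_add_le_succ (m r : ℕ) :
    #(turanGraph m r).edgeFinset + (m - m / r) ≤ #(turanGraph (m + 1) r).edgeFinset := by
  have hdel := card_edgeFinset_deleteIncidenceSet (turanGraph (m + 1) r) (Fin.last m)
  have hmap : #(turanGraph m r).edgeFinset ≤
      #((turanGraph (m + 1) r).deleteIncidenceSet (Fin.last m)).edgeFinset := by
    rw [← card_edgeFinset_map Fin.castSuccEmb]
    convert card_le_card (edgeFinset_mono (turanGraph_map_castSucc_le m r))
  have hdeg :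
      (turanGraph (m + 1) r).degree (Fin.last m) ≤ #(turanGraph (m + 1) r).edgeFinset := by
    rw [← card_incidenceFinset_eq_degree]
    exact card_le_card (incidenceFinset_subset _ _)
  have := sub_div_le_degree_turanGraph_last m r
  omega

theorem card_edgeFinset_turanGraph_add_le {r : ℕ} (hr : 8 ≤ r) (a k : ℕ) :
    8 * #(turanGraph a r).edgeFinset + 7 * (a * k + k.choose 2) ≤
      8 * #(turanGraph (a + k) r).edgeFinset := by
  induction k with
  | zero => simp
  | succ k ih =>
    have hstep := card_edgeFinset_turanGraph_add_le_succ (a + k) r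
    have hdiv : 8 * ((a + k) / r) ≤ a + k :=
      (Nat.mul_le_mul_right _ hr).trans (Nat.mul_div_le _ _)
    have hchoose : (k + 1).choose 2 = k.choose 2 + k := by
      rw [Nat.choose_succ_succ', Nat.choose_one_right, add_comm]
    rw [hchoose, ← add_assoc a k 1, mul_add_one]
    omega

theorem card_edgeFinset_turanGraph_sub_add_le {r n j : ℕ} {ℓ : ℤ} (hr : 8 ≤ r) (hl : -1 ≤ ℓ)
    (hn : 2 * ℓ + 9 ≤ n) (hj : 1 ≤ j) (hjn : (2 * j : ℤ) ≤ n - 1 - ℓ) :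
    (#(turanGraph (n - j) r).edgeFinset : ℤ) + (j - 1) * (j + ℓ + 1) ≤
      #(turanGraph (n - 1) r).edgeFinset := by
  obtain ⟨i, rfl⟩ : ∃ i, j = i + 1 := ⟨j - 1, by omega⟩
  have hgain := card_edgeFinset_turanGraph_add_le hr (n - (i + 1)) i
  rw [show n - (i + 1) + i = n - 1 by omega] at hgain
  have hchoose : 2 * i.choose 2 + i = i * i := by
    rw [Nat.choose_two_right, Nat.mul_div_cancel' (Nat.even_mul_pred_self i).two_dvd]
    cases i <;> simp [Nat.add_mul, Nat.mul_add]
  have hcast : ((n - (i + 1) : ℕ) : ℤ) = n - (i + 1) := by omega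
  zify at hgain hchoose
  rw [hcast] at hgain
  have hslack : (0 : ℤ) ≤ 14 * n - 23 * i - 16 * ℓ - 53 := by push_cast at hjn; linarith
  push_cast
  nlinarith [mul_nonneg (Int.natCast_nonneg i) hslack]

end SimpleGraph

open SimpleGraph

/-- Theorem 4.1 (bound): Let `ℓ ≥ -1`, `r ≥ 8`, `n ≥ 2ℓ+9`.  If `G` is an `n`-vertex
`K_{r+1}`-free graph whose sorted degree sequence satisfies `d_j ≤ j + ℓ` for some
`1 ≤ j ≤ (n-1-ℓ)/2` (i.e. `G` has `j` vertices of degree at most `j+ℓ`), then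
`e(G) ≤ e(T_r(n-1)) + ℓ + 1`. -/
theorem cliqueFree_low_degree_edge_bound_r_ge_8
    {V : Type} [Fintype V] [DecidableEq V]
    (G : SimpleGraph V) [DecidableRel G.Adj] (n r : ℕ) (ℓ : ℤ)
    (hl : -1 ≤ ℓ) (hr : 8 ≤ r) (hn : (2 : ℤ) * ℓ + 9 ≤ n)
    (hcard : Fintype.card V = n)
    (hfree : G.CliqueFree (r + 1))
    (hdegcond : ∃ (j : ℕ) (J : Finset V), 1 ≤ j ∧ (2 * j : ℤ) ≤ (n : ℤ) - 1 - ℓ ∧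
      J.card = j ∧ ∀ v ∈ J, (G.degree v : ℤ) ≤ (j : ℤ) + ℓ) :
    (G.edgeFinset.card : ℤ) ≤
      ((SimpleGraph.turanGraph (n - 1) r).edgeFinset.card : ℤ) + ℓ + 1 := by
  obtain ⟨_, J, hj, hjn, rfl, hJdeg⟩ := hdegcond
  have hsplit := G.card_edgeFinset_le_card_edgeFinset_induce_compl_add_sum_degree J
  have hcompl : Fintype.card ↥((↑J : Set V)ᶜ) = n - #J := by
    rw [Fintype.card_compl_set]; simp [hcard]
  have hrest : #(G.induce (↑J)ᶜ).edgeFinset ≤ #(turanGraph (n - #J) r).edgeFinset := by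
    rw [← hcompl]
    exact (hfree.comap (Embedding.induce (↑J)ᶜ).isContained).card_edgeFinset_le_turanGraph
  have hdeg : ∑ v ∈ J, (G.degree v : ℤ) ≤ #J * (#J + ℓ) :=
    (sum_le_sum hJdeg).trans_eq (by rw [sum_const, nsmul_eq_mul])
  have hgrowth := card_edgeFinset_turanGraph_sub_add_le hr hl hn hj hjn
  zify at hsplit hrest
  linarith
end

section
/- Let ℓ ≥ -1 be an integer and n ≥ 6ℓ+26. Let G be an n-vertex K_4-free graph with degree sequence d_1 ≤ ⋯ ≤ d_n. If there is an integer j with 1 ≤ j ≤ (n-1-ℓ)/2 such that d_j ≤ j + ℓ, then e(G) ≤ ⌊n²/3 - 2n/3 + (3ℓ+4)/3⌋ = e(T_3(n-1)) + ℓ + 1. -/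
/-!
Delete `k ≤ j` of the low-degree vertices: this removes at most `k(j + ℓ)` edges, and the
remaining `K₄`-free graph on `n - k` vertices has at most `(n - k)²/3` edges by Turán's theorem.
For a suitable `k`, `(n - k)² + 3k(j + ℓ) ≤ (n - 1)² + 3(ℓ + 1) = 3(e(T₃(n - 1)) + ℓ + 1)`.
-/

open Finset SimpleGraph

namespace SimpleGraph

lemma turan_three_formula (n : ℕ) :
    (n ^ 2 - (n % 3) ^ 2) * (3 - 1) / (2 * 3) + (n % 3).choose 2 = n ^ 2 / 3 := by
  obtain ⟨q, r, hr, rfl⟩ : ∃ q r, r < 3 ∧ n = q * 3 + r :=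
    ⟨n / 3, n % 3, n.mod_lt three_pos, by lia⟩
  rw [Nat.mul_add_mod_of_lt hr, show (q * 3 + r) ^ 2 = 9 * q ^ 2 + 6 * r * q + r ^ 2 by ring]
  generalize q ^ 2 = Q
  interval_cases r <;> simp only [Nat.choose] <;> omega

lemma card_edgeFinset_turanGraph_three (n : ℕ) : #(turanGraph n 3).edgeFinset = n ^ 2 / 3 := by
  rw [card_edgeFinset_turanGraph, turan_three_formula]

variable {V : Type*} [Fintype V] {G : SimpleGraph V} [DecidableRel G.Adj]

lemma card_edgeFinset_le_card_edgeFinset_induce_add_sum_degree [DecidableEq V] (s : Set V)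
    [DecidablePred (· ∈ s)] :
    #G.edgeFinset ≤ #(G.induce s).edgeFinset + ∑ v ∈ sᶜ.toFinset, G.degree v := by
  have hcover : G.edgeFinset ⊆
      (G.edgeFinset ∩ s.toFinset.sym2) ∪ sᶜ.toFinset.biUnion (G.incidenceFinset ·) := by
    intro e he
    by_cases hes : e ∈ s.toFinset.sym2
    · exact mem_union_left _ (mem_inter.2 ⟨he, hes⟩)
    · obtain ⟨v, hve, hvs⟩ : ∃ v ∈ e, v ∉ s := by simpa [mem_sym2_iff] using hes
      refine mem_union_right _ (mem_biUnion.2 ⟨v, by simpa using hvs, ?_⟩)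
      exact (G.mem_incidenceFinset _ _).2 ⟨mem_edgeFinset.1 he, hve⟩
  calc #G.edgeFinset
      ≤ #(G.edgeFinset ∩ s.toFinset.sym2) + #(sᶜ.toFinset.biUnion (G.incidenceFinset ·)) :=
        (card_le_card hcover).trans (card_union_le _ _)
    _ ≤ #(G.induce s).edgeFinset + ∑ v ∈ sᶜ.toFinset, G.degree v := by
        rw [← map_edgeFinset_induce, card_map]
        gcongr
        exact card_biUnion_le.trans_eq (sum_congr rfl fun v _ ↦ G.card_incidenceFinset_eq_degree v)

lemma CliqueFree.card_edgeFinset_le_sq_div_three (hG : G.CliqueFree 4) :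
    #G.edgeFinset ≤ Fintype.card V ^ 2 / 3 := by
  simpa only [turan_three_formula] using hG.card_edgeFinset_le (r := 3)

lemma CliqueFree.three_mul_card_edgeFinset_le_of_degree_le [DecidableEq V] (hG : G.CliqueFree 4)
    (K : Finset V) {d : ℤ} (hK : ∀ v ∈ K, (G.degree v : ℤ) ≤ d) :
    3 * (#G.edgeFinset : ℤ) ≤ ((Fintype.card V : ℤ) - #K) ^ 2 + 3 * #K * d := by
  set s : Set V := (↑K)ᶜ
  have hcompl : sᶜ.toFinset = K := by ext; simp [s]
  have hcard : Fintype.card s = Fintype.card V - #K := by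
    rw [← Set.toFinset_card, Set.toFinset_compl, Finset.toFinset_coe, card_compl]
  have hinduce := (hG.comap (Embedding.induce s).isContained).card_edgeFinset_le_sq_div_three
  have hsplit := card_edgeFinset_le_card_edgeFinset_induce_add_sum_degree (G := G) s
  have hdeg : ∑ v ∈ K, (G.degree v : ℤ) ≤ #K * d := by
    simpa using sum_le_card_nsmul K _ d hK
  rw [hcompl] at hsplit
  rw [hcard] at hinduce
  have hKV : #K ≤ Fintype.card V := card_le_univ K
  have hdiv := Nat.div_mul_le_self ((Fintype.card V - #K) ^ 2) 3
  zify [hKV] at hsplit hinduce hdiv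
  linarith

end SimpleGraph

lemma exists_sub_sq_add_three_mul_le (n j ℓ : ℤ) (hl : -1 ≤ ℓ) (hn : 6 * ℓ + 26 ≤ n) (hj : 1 ≤ j)
    (hjn : 2 * j ≤ n - 1 - ℓ) :
    ∃ k : ℕ, (k : ℤ) ≤ j ∧ (n - k) ^ 2 + 3 * k * (j + ℓ) ≤ (n - 1) ^ 2 + (ℓ + 1) * 3 := by
  -- The left side is a convex quadratic in `k` with vertex `n - 3(j + ℓ)/2`: for small `j`
  -- take `k = j`, otherwise round the vertex down.
  by_cases hc : 4 * j + 4 + 3 * ℓ ≤ 2 * n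
  · lift j to ℕ using by omega
    exact ⟨j, le_rfl, by nlinarith [mul_nonneg (sub_nonneg.2 hj) (sub_nonneg.2 hc)]⟩
  · obtain ⟨k, u, hk, hu0, hu1⟩ : ∃ k u : ℤ, 2 * k + u = 2 * n - 3 * j - 3 * ℓ ∧ 0 ≤ u ∧ u ≤ 1 :=
      ⟨(2 * n - 3 * j - 3 * ℓ) / 2, (2 * n - 3 * j - 3 * ℓ) % 2, by omega, by omega, by omega⟩
    lift k to ℕ using by omega
    refine ⟨k, by omega, ?_⟩
    nlinarith [sq_nonneg (n - 3 * ℓ - 26),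
      mul_nonneg (by linarith : (0:ℤ) ≤ 2 * (2 * n - 3 * j - 3 * ℓ) - (n + 3 - 3 * ℓ))
        (by linarith : (0:ℤ) ≤ 2 * (2 * n - 3 * j - 3 * ℓ) + (n + 3 - 3 * ℓ)),
      mul_nonneg hu0 (by linarith : (0:ℤ) ≤ 1 - u)]

/-- Theorem 4.8: Let `ℓ ≥ -1` and `n ≥ 6ℓ+26`.  If `G` is an `n`-vertex `K_4`-free graph
with `j` vertices of degree at most `j+ℓ` for some `1 ≤ j ≤ (n-1-ℓ)/2`, then
`e(G) ≤ ⌊n²/3 - 2n/3 + (3ℓ+4)/3⌋ = e(T_3(n-1)) + ℓ + 1`. -/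
theorem K4free_low_degree_edge_bound
    {V : Type} [Fintype V] [DecidableEq V]
    (G : SimpleGraph V) [DecidableRel G.Adj] (n : ℕ) (ℓ : ℤ)
    (hl : -1 ≤ ℓ) (hn : (6 : ℤ) * ℓ + 26 ≤ n)
    (hcard : Fintype.card V = n)
    (hfree : G.CliqueFree 4)
    (hdegcond : ∃ (j : ℕ) (J : Finset V), 1 ≤ j ∧ (2 * j : ℤ) ≤ (n : ℤ) - 1 - ℓ ∧
      J.card = j ∧ ∀ v ∈ J, (G.degree v : ℤ) ≤ (j : ℤ) + ℓ) :
    (G.edgeFinset.card : ℤ) ≤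
        ⌊(n : ℝ) ^ 2 / 3 - 2 * n / 3 + (3 * (ℓ : ℝ) + 4) / 3⌋ ∧
      ⌊(n : ℝ) ^ 2 / 3 - 2 * n / 3 + (3 * (ℓ : ℝ) + 4) / 3⌋ =
        ((SimpleGraph.turanGraph (n - 1) 3).edgeFinset.card : ℤ) + ℓ + 1 := by
  obtain ⟨j, J, hj1, hjn, rfl, hJdeg⟩ := hdegcond
  obtain ⟨k, hkj, hk⟩ := exists_sub_sq_add_three_mul_le n (#J) ℓ hl hn (by exact_mod_cast hj1) hjn
  obtain ⟨K, hKJ, rfl⟩ := exists_subset_card_eq (show k ≤ #J by exact_mod_cast hkj)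
  have hedges := hfree.three_mul_card_edgeFinset_le_of_degree_le K fun v hv ↦ hJdeg v (hKJ hv)
  rw [hcard] at hedges
  have hfloor : ⌊(n : ℝ) ^ 2 / 3 - 2 * n / 3 + (3 * (ℓ : ℝ) + 4) / 3⌋
      = ((n : ℤ) - 1) ^ 2 / 3 + (ℓ + 1) := by
    rw [show (n : ℝ) ^ 2 / 3 - 2 * n / 3 + (3 * (ℓ : ℝ) + 4) / 3
        = (((n - 1) ^ 2 + (ℓ + 1) * 3 : ℤ) : ℝ) / (3 : ℕ) by push_cast; ring,
      Int.floor_div_natCast, Int.floor_intCast, Nat.cast_ofNat,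
      Int.add_mul_ediv_right _ _ three_ne_zero]
  refine ⟨?_, ?_⟩
  · rw [hfloor, ← sub_le_iff_le_add, Int.le_ediv_iff_mul_le three_pos]
    linarith
  · rw [hfloor, card_edgeFinset_turanGraph_three]
    push_cast [Nat.cast_sub (show 1 ≤ n by omega)]
    ring
end

section
/- For n ≥ 8, if G is an n-vertex triangle-free graph that is not traceable, then e(G) ≤ e(K_{⌊n/2⌋-1, ⌈n/2⌉+1}), that is, e(G) ≤ n²/4 - 1 if n is even and e(G) ≤ (n²-9)/4 if n is odd; and the complete bipartite graph K_{⌊n/2⌋-1, ⌈n/2⌉+1} is the unique graph attaining equality. -/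
/-!
Let `A` be a maximum independent set of `G`, `α = |A|`, `B = Aᶜ`, `β = |B|`. Neighbourhoods in a
triangle-free graph are independent, so every degree is at most `α`; as every edge meets `B`,
`2 e(G) = ∑_{b ∈ B} (d_A(b) + d(b)) ≤ 2αβ`, and an edge inside `B` costs a further `α`, because
its ends have disjoint neighbourhoods in `A`.

* If `α ≥ ⌈n/2⌉ + 1`, then `αβ ≤ e(K_{⌊n/2⌋-1, ⌈n/2⌉+1})`, and equality forces `G` to be that
  complete bipartite graph.
* If `α = ⌈n/2⌉` and `e(G)` reaches the bound, then `B` is independent and at most two pairs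
  between `A` and `B` are non-adjacent; a path alternating between `A` and `B` that avoids these
  pairs is Hamiltonian.
* If `α < ⌈n/2⌉`, then `2 e(G) ≤ nα` is below the bound, except for odd `n` and `α = ⌊n/2⌋`,
  where reaching it would make `G` an `α`-regular graph on `2α + 1` vertices, impossible for
  `α ≥ 3`.
-/

open Finset

theorem Nat.div_two_sub_one_mul_of_even {n : ℕ} (h : Even n) :
    (n / 2 - 1) * ((n + 1) / 2 + 1) = n ^ 2 / 4 - 1 := by
  obtain ⟨k, rfl⟩ := h
  rw [show (k + k) / 2 = k by omega, show (k + k + 1) / 2 = k by omega,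
    show (k + k) ^ 2 / 4 = k * k by rw [Nat.div_eq_of_eq_mul_left (by norm_num)]; ring]
  rcases k with _ | k
  · rfl
  · rw [Nat.add_sub_cancel, show (k + 1) * (k + 1) = k * (k + 1 + 1) + 1 by ring,
      Nat.add_sub_cancel]

theorem Nat.div_two_sub_one_mul_of_odd {n : ℕ} (h : Odd n) :
    (n / 2 - 1) * ((n + 1) / 2 + 1) = (n ^ 2 - 9) / 4 := by
  obtain ⟨k, rfl⟩ := h
  rw [show (2 * k + 1) / 2 = k by omega, show (2 * k + 1 + 1) / 2 = k + 1 by omega]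
  rcases k with _ | k
  · rfl
  · rw [show (2 * (k + 1) + 1) ^ 2 - 9 = 4 * (k * (k + 3)) by ring_nf; omega]
    rw [Nat.mul_div_cancel_left _ (by norm_num), Nat.add_sub_cancel]

theorem Nat.mul_le_div_two_sub_one_mul {a b n : ℕ} (hab : a + b = n) (ha : (n + 1) / 2 + 1 ≤ a) :
    a * b ≤ (n / 2 - 1) * ((n + 1) / 2 + 1) ∧
      (a * b = (n / 2 - 1) * ((n + 1) / 2 + 1) → b = n / 2 - 1) := by
  obtain ⟨t, rfl⟩ := Nat.exists_eq_add_of_le ha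
  have hb : n / 2 - 1 = b + t := by omega
  have hbK : b < (n + 1) / 2 + 1 := by omega
  rw [hb]
  constructor
  · nlinarith
  · intro h
    have : t * b = t * ((n + 1) / 2 + 1) := by nlinarith
    rcases Nat.eq_zero_or_pos t with rfl | ht
    · rfl
    · exact absurd this (Nat.mul_lt_mul_of_pos_left hbK ht).ne

theorem Finset.exists_nodup_list_with_prefix {α : Type*} [DecidableEq α] {s t : Finset α}
    (h : s ⊆ t) : ∃ l : List α, l.Nodup ∧ (∀ x, x ∈ l ↔ x ∈ t) ∧ l.length = #t ∧
      ∀ i (hi : i < l.length), l[i] ∈ s ↔ i < #s := by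
  refine ⟨s.toList ++ (t \ s).toList, ?_, fun x => ?_, ?_, fun i hi => ?_⟩
  · exact (nodup_toList s).append (nodup_toList _) fun x hx hx' => by simp_all
  · have := @h x
    simp only [List.mem_append, mem_toList, mem_sdiff]
    tauto
  · simp [card_sdiff_of_subset h, card_le_card h]
  · by_cases his : i < #s
    · rw [List.getElem_append_left (by simpa using his)]
      exact iff_of_true (mem_toList.1 (List.getElem_mem _)) his
    · rw [List.getElem_append_right (by simpa using his)]
      exact iff_of_false (mem_sdiff.1 (mem_toList.1 (List.getElem_mem _))).2 his

namespace SimpleGraph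

section

variable {V : Type*} {G : SimpleGraph V}

theorem exists_walk_support_perm_of_interleave (a : V) (la lb : List V)
    (hlen : la.length ≤ lb.length ∧ lb.length ≤ la.length + 1)
    (hadj : ∀ i j (hi : i < (a :: la).length) (hj : j < lb.length), j ≤ i → i ≤ j + 1 →
      G.Adj (a :: la)[i] lb[j]) :
    ∃ w, ∃ p : G.Walk a w, p.support.Perm (a :: la ++ lb) := by
  induction lb generalizing a la with
  | nil =>
    obtain rfl : la = [] := List.eq_nil_of_length_eq_zero (by simpa using hlen.1)
    exact ⟨a, .nil, by simp⟩
  | cons b lb ih =>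
    have hab : G.Adj a b := hadj 0 0 (by simp) (by simp) le_rfl (by omega)
    cases la with
    | nil =>
      obtain rfl : lb = [] := List.eq_nil_of_length_eq_zero (by simpa using hlen.2)
      exact ⟨b, .cons hab .nil, by simp⟩
    | cons a' la =>
      have hba' : G.Adj b a' := (hadj 1 0 (by simp) (by simp) (by omega) (by omega)).symm
      obtain ⟨w, p, hp⟩ := ih a' la (by simp only [List.length_cons] at hlen; omega)
        fun i j hi hj h₁ h₂ => hadj (i + 1) (j + 1) (by simpa using hi) (by simpa using hj)
          (by omega) (by omega)
      exact ⟨w, .cons hab (.cons hba' p), ((hp.cons b).trans List.perm_middle.symm).cons a⟩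

end

variable {V : Type*} [Fintype V] {G : SimpleGraph V} [DecidableRel G.Adj] {A : Finset V}

theorem IsMaximumIndepSet.degree_le_card (hA : G.IsMaximumIndepSet A) (h : G.CliqueFree 3)
    (v : V) : G.degree v ≤ #A := by
  rw [← card_neighborFinset_eq_degree]
  exact hA.maximum _ (by simpa using isIndepSet_neighborSet_of_triangleFree G h v)

theorem IsMaximumIndepSet.two_mul_card_edgeFinset_le (hA : G.IsMaximumIndepSet A)
    (h : G.CliqueFree 3) : 2 * #G.edgeFinset ≤ Fintype.card V * #A := by
  rw [← sum_degrees_eq_twice_card_edges, ← smul_eq_mul, ← card_univ, ← sum_const]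
  exact sum_le_sum fun v _ => hA.degree_le_card h v

theorem IsMaximumIndepSet.degree_eq_of_two_mul_card_edgeFinset_eq (hA : G.IsMaximumIndepSet A)
    (h : G.CliqueFree 3) (hE : 2 * #G.edgeFinset = Fintype.card V * #A) (v : V) :
    G.degree v = #A := by
  refine (sum_eq_sum_iff_of_le fun v _ => hA.degree_le_card h v).1 ?_ v (mem_univ v)
  rw [sum_const, card_univ, smul_eq_mul, sum_degrees_eq_twice_card_edges, hE]

variable [DecidableEq V]

theorem IsIndepSet.neighborFinset_subset_compl (hA : G.IsIndepSet A) {a : V} (ha : a ∈ A) :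
    G.neighborFinset a ⊆ Aᶜ := fun _ hb =>
  mem_compl.2 fun hbA => hA ha hbA (G.ne_of_adj ((mem_neighborFinset ..).1 hb))
    ((mem_neighborFinset ..).1 hb)

theorem card_neighborFinset_inter_add_le_of_adj (h : G.CliqueFree 3) {b₁ b₂ : V}
    (hb : G.Adj b₁ b₂) (A : Finset V) :
    #(G.neighborFinset b₁ ∩ A) + #(G.neighborFinset b₂ ∩ A) ≤ #A := by
  rw [← card_union_of_disjoint]
  · exact card_le_card (union_subset inter_subset_right inter_subset_right)
  · rw [Finset.disjoint_left]
    intro a ha₁ ha₂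
    simp only [mem_inter, mem_neighborFinset] at ha₁ ha₂
    exact h {b₁, b₂, a} (is3Clique_triple_iff.2 ⟨hb, ha₁.1, ha₂.1⟩)

theorem sum_card_neighborFinset_inter_comm (s t : Finset V) :
    ∑ v ∈ s, #(G.neighborFinset v ∩ t) = ∑ v ∈ t, #(G.neighborFinset v ∩ s) := by
  convert sum_card_bipartiteAbove_eq_sum_card_bipartiteBelow (s := s) (t := t) (r := G.Adj)
    using 3 with v _ v _
  · ext w; simp [bipartiteAbove, and_comm]
  · ext w; simp [bipartiteBelow, and_comm, adj_comm]

theorem IsIndepSet.two_mul_card_edgeFinset_eq (hA : G.IsIndepSet A) :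
    2 * #G.edgeFinset = ∑ b ∈ Aᶜ, (#(G.neighborFinset b ∩ A) + G.degree b) := by
  have hdeg : ∀ a ∈ A, G.degree a = #(G.neighborFinset a ∩ Aᶜ) := fun a ha => by
    rw [← card_neighborFinset_eq_degree, inter_eq_left.2 (hA.neighborFinset_subset_compl ha)]
  rw [← sum_degrees_eq_twice_card_edges, ← sum_add_sum_compl A, sum_congr rfl hdeg,
    sum_card_neighborFinset_inter_comm, sum_add_distrib]

theorem IsMaximumIndepSet.card_neighborFinset_inter_add_degree_le (hA : G.IsMaximumIndepSet A)
    (h : G.CliqueFree 3) (b : V) : #(G.neighborFinset b ∩ A) + G.degree b ≤ #A + #A :=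
  add_le_add (card_le_card inter_subset_right) (hA.degree_le_card h b)

theorem IsMaximumIndepSet.card_edgeFinset_le_mul (hA : G.IsMaximumIndepSet A)
    (h : G.CliqueFree 3) : #G.edgeFinset ≤ #A * #Aᶜ := by
  have hsum : ∑ b ∈ Aᶜ, (#(G.neighborFinset b ∩ A) + G.degree b) ≤ ∑ _b ∈ Aᶜ, (#A + #A) :=
    sum_le_sum fun b _ => hA.card_neighborFinset_inter_add_degree_le h b
  rw [← hA.isIndepSet.two_mul_card_edgeFinset_eq, sum_const, smul_eq_mul] at hsum
  linarith

theorem IsMaximumIndepSet.neighborFinset_eq_of_card_edgeFinset_eq (hA : G.IsMaximumIndepSet A)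
    (h : G.CliqueFree 3) (hE : #G.edgeFinset = #A * #Aᶜ) (b : V) (hb : b ∈ Aᶜ) :
    G.neighborFinset b = A := by
  have hle : ∀ b ∈ Aᶜ, #(G.neighborFinset b ∩ A) + G.degree b ≤ #A + #A :=
    fun b _ => hA.card_neighborFinset_inter_add_degree_le h b
  have hsum : ∑ b ∈ Aᶜ, (#(G.neighborFinset b ∩ A) + G.degree b) = ∑ _b ∈ Aᶜ, (#A + #A) := by
    rw [← hA.isIndepSet.two_mul_card_edgeFinset_eq, sum_const, smul_eq_mul, hE]; ring
  have hb' := (sum_eq_sum_iff_of_le hle).1 hsum b hb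
  have hinter := card_le_card (inter_subset_right (s₁ := G.neighborFinset b) (s₂ := A))
  have hdeg := hA.degree_le_card h b
  have hAN : A ⊆ G.neighborFinset b :=
    inter_eq_right.1 (eq_of_subset_of_card_le inter_subset_right (by omega))
  exact (eq_of_subset_of_card_le hAN (by rw [card_neighborFinset_eq_degree]; omega)).symm

theorem nonempty_iso_completeBipartiteGraph_of_neighborFinset_eq (hA : G.IsIndepSet A)
    (h : ∀ b ∈ Aᶜ, G.neighborFinset b = A) :
    Nonempty (G ≃g completeBipartiteGraph (Fin #Aᶜ) (Fin #A)) := by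
  have hadj : ∀ u v, u ∉ A → (G.Adj u v ↔ v ∈ A) := fun u v hu => by
    rw [← mem_neighborFinset, h u (mem_compl.2 hu)]
  let e : V ≃ Fin #Aᶜ ⊕ Fin #A := (Equiv.sumCompl (· ∉ A)).symm.trans
    (Equiv.sumCongr
      (Fintype.equivFinOfCardEq (by simp [Fintype.card_subtype, filter_not, compl_eq_univ_sdiff]))
      (Fintype.equivFinOfCardEq (by simp [Fintype.card_subtype])))
  refine ⟨⟨e, fun {u v} => ?_⟩⟩
  by_cases hu : u ∈ A <;> by_cases hv : v ∈ A
  · simpa [e, Equiv.sumCompl_symm_apply_of_neg, hu, hv] using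
      fun huv => hA hu hv (G.ne_of_adj huv) huv
  · simp [e, Equiv.sumCompl_symm_apply_of_neg, Equiv.sumCompl_symm_apply_of_pos, hu, hv,
      G.adj_comm u, hadj v u hv]
  · simp [e, Equiv.sumCompl_symm_apply_of_neg, Equiv.sumCompl_symm_apply_of_pos, hu, hv,
      hadj u v hu]
  · simp [e, Equiv.sumCompl_symm_apply_of_pos, hu, hv, hadj u v hu]

theorem IsMaximumIndepSet.two_mul_card_edgeFinset_add_card_le_of_adj
    (hA : G.IsMaximumIndepSet A) (h : G.CliqueFree 3) {b₁ b₂ : V} (hb₁ : b₁ ∈ Aᶜ) (hb₂ : b₂ ∈ Aᶜ)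
    (hb : G.Adj b₁ b₂) : 2 * #G.edgeFinset + #A ≤ 2 * (#A * #Aᶜ) := by
  have hpair : {b₁, b₂} ⊆ Aᶜ := insert_subset hb₁ (singleton_subset_iff.2 hb₂)
  have hcard : #(Aᶜ \ {b₁, b₂}) + 2 = #Aᶜ := by
    rw [card_sdiff_of_subset hpair, card_pair (G.ne_of_adj hb)]
    have := card_le_card hpair
    rw [card_pair (G.ne_of_adj hb)] at this
    omega
  have hrest : ∑ b ∈ Aᶜ \ {b₁, b₂}, #(G.neighborFinset b ∩ A) ≤ #(Aᶜ \ {b₁, b₂}) * #A := by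
    rw [← smul_eq_mul, ← sum_const]; exact sum_le_sum fun _ _ => card_le_card inter_subset_right
  have hdeg : ∑ b ∈ Aᶜ, G.degree b ≤ #Aᶜ * #A := by
    rw [← smul_eq_mul, ← sum_const]; exact sum_le_sum fun b _ => hA.degree_le_card h b
  have h₁₂ := card_neighborFinset_inter_add_le_of_adj h hb A
  rw [hA.isIndepSet.two_mul_card_edgeFinset_eq, sum_add_distrib, ← sum_sdiff hpair,
    sum_pair (G.ne_of_adj hb)]
  rw [← hcard] at hdeg ⊢
  nlinarith

theorem IsMaximumIndepSet.exists_adj_of_card_lt (hA : G.IsMaximumIndepSet A) (h : #A < #Aᶜ) :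
    ∃ b₁ ∈ Aᶜ, ∃ b₂ ∈ Aᶜ, b₁ ≠ b₂ ∧ G.Adj b₁ b₂ := by
  by_contra! hB
  exact (hA.maximum Aᶜ fun u hu v hv huv => hB u hu v hv huv).not_gt h

theorem IsMaximumIndepSet.two_mul_card_edgeFinset_lt (hA : G.IsMaximumIndepSet A)
    (h : G.CliqueFree 3) (hcard : #Aᶜ = #A + 1) (h3 : 3 ≤ #A) :
    2 * #G.edgeFinset < Fintype.card V * #A := by
  by_contra! hE
  replace hE := (hA.two_mul_card_edgeFinset_le h).antisymm hE
  have hreg := hA.degree_eq_of_two_mul_card_edgeFinset_eq h hE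
  obtain ⟨b₁, hb₁, b₂, hb₂, hne, hb⟩ := hA.exists_adj_of_card_lt (by omega)
  -- `G` is `α`-regular, so the `d_B(b) = #(N(b) \ A)`, `b ∈ B`, sum to `α`; the edge `b₁b₂`
  -- alone accounts for `α` of them, so no other vertex of `B` has a neighbour in `B`.
  have hsplit : ∀ b, #(G.neighborFinset b ∩ A) + #(G.neighborFinset b \ A) = #A := fun b => by
    rw [card_inter_add_card_sdiff, card_neighborFinset_eq_degree, hreg]
  have hout : ∑ b ∈ Aᶜ, #(G.neighborFinset b \ A) = #A := by
    have h2E := hA.isIndepSet.two_mul_card_edgeFinset_eq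
    have hsum := sum_congr rfl (fun b (_ : b ∈ Aᶜ) => hsplit b)
    simp only [hreg, sum_add_distrib, sum_const, smul_eq_mul] at h2E hsum
    rw [← card_add_card_compl A] at hE
    nlinarith
  have hpair : #A ≤ #(G.neighborFinset b₁ \ A) + #(G.neighborFinset b₂ \ A) := by
    have := card_neighborFinset_inter_add_le_of_adj h hb A
    have := hsplit b₁
    have := hsplit b₂
    omega
  have hzero : ∀ c ∈ Aᶜ \ {b₁, b₂}, #(G.neighborFinset c \ A) = 0 := by
    have := sum_sdiff (f := fun b => #(G.neighborFinset b \ A))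
      (insert_subset hb₁ (singleton_subset_iff.2 hb₂))
    rw [sum_pair hne] at this
    exact sum_eq_zero_iff.1 (by omega)
  have hsub : ∀ x ∈ Aᶜ, G.neighborFinset x \ A ⊆ ({b₁, b₂} : Finset V).erase x := by
    intro x hx c hc
    rw [mem_sdiff, mem_neighborFinset] at hc
    refine mem_erase.2 ⟨(G.ne_of_adj hc.1).symm, by_contra fun hc' => ?_⟩
    have := hzero c (mem_sdiff.2 ⟨mem_compl.2 hc.2, hc'⟩)
    rw [card_eq_zero, eq_empty_iff_forall_notMem] at this
    exact this x (mem_sdiff.2 ⟨(mem_neighborFinset ..).2 hc.1.symm, mem_compl.1 hx⟩)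
  have h₁ := card_le_card (hsub b₁ hb₁)
  have h₂ := card_le_card (hsub b₂ hb₂)
  rw [card_erase_of_mem (by simp), card_pair hne] at h₁ h₂
  omega

theorem IsIndepSet.card_edgeFinset_add_sum_card_sdiff (hA : G.IsIndepSet A)
    (hAc : G.IsIndepSet (Aᶜ : Finset V)) :
    #G.edgeFinset + ∑ b ∈ Aᶜ, #(A \ G.neighborFinset b) = #A * #Aᶜ := by
  have h2E := hA.two_mul_card_edgeFinset_eq
  have hdeg : ∀ b ∈ Aᶜ, G.degree b = #(G.neighborFinset b ∩ A) := fun b hb => by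
    rw [← card_neighborFinset_eq_degree,
      inter_eq_left.2 (by simpa using hAc.neighborFinset_subset_compl hb)]
  have hsplit : ∑ b ∈ Aᶜ, (#(A \ G.neighborFinset b) + #(G.neighborFinset b ∩ A)) =
      ∑ _b ∈ Aᶜ, #A := sum_congr rfl fun b _ => by rw [inter_comm, card_sdiff_add_card_inter]
  rw [sum_congr rfl fun b hb => congrArg _ (hdeg b hb)] at h2E
  rw [sum_add_distrib, sum_const, smul_eq_mul] at hsplit
  rw [sum_add_distrib] at h2E
  linarith

theorem exists_isHamiltonian_of_sum_card_sdiff_le_two (hle : #Aᶜ ≤ #A) (hle' : #A ≤ #Aᶜ + 1)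
    (h4 : 4 ≤ #Aᶜ) (hmiss : ∑ b ∈ Aᶜ, #(A \ G.neighborFinset b) ≤ 2) :
    ∃ (u w : V) (p : G.Walk u w), p.IsHamiltonian := by
  set X := Aᶜ.biUnion fun b => A \ G.neighborFinset b
  set Y := Aᶜ.filter fun b => (A \ G.neighborFinset b).Nonempty
  have hX : #X ≤ 2 := card_biUnion_le.trans hmiss
  have hY : #Y ≤ 2 := calc
    #Y = ∑ _b ∈ Y, 1 := card_eq_sum_ones Y
    _ ≤ ∑ b ∈ Y, #(A \ G.neighborFinset b) :=
      sum_le_sum fun b hb => card_pos.2 (mem_filter.1 hb).2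
    _ ≤ 2 := (sum_le_sum_of_subset (filter_subset _ _)).trans hmiss
  have hgood : ∀ a ∈ A, ∀ b ∈ Aᶜ, a ∉ X ∨ b ∉ Y → G.Adj a b := by
    intro a ha b hb hab
    by_contra hn
    have hmem : a ∈ A \ G.neighborFinset b := mem_sdiff.2 ⟨ha, by simpa [adj_comm] using hn⟩
    exact hab.elim (· (mem_biUnion.2 ⟨b, hb, hmem⟩)) (· (mem_filter.2 ⟨hb, a, hmem⟩))
  -- Listing `X` first in `A` and two vertices outside `Y` first in `B` keeps every non-adjacent
  -- pair off the alternating path.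
  obtain ⟨g, hgY, hg⟩ := exists_subset_card_eq (s := Aᶜ \ Y) (n := 2)
    (by have := le_card_sdiff Y Aᶜ; omega)
  obtain ⟨la, hla, hmemA, hlenA, hX'⟩ := exists_nodup_list_with_prefix (s := X)
    (biUnion_subset.2 fun b _ => sdiff_subset)
  obtain ⟨lb, hlb, hmemB, hlenB, hg'⟩ :=
    exists_nodup_list_with_prefix (hgY.trans sdiff_subset)
  obtain ⟨a, la, rfl⟩ := List.exists_cons_of_length_pos (by omega : 0 < la.length)
  obtain ⟨w, p, hp⟩ := exists_walk_support_perm_of_interleave (G := G) a la lb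
    (by simp only [List.length_cons] at hlenA; omega) fun i j hi hj h₁ h₂ => by
      refine hgood _ ((hmemA _).1 (List.getElem_mem hi)) _ ((hmemB _).1 (List.getElem_mem hj))
        ?_
      by_cases hi2 : 2 ≤ i
      · exact .inl fun h => by have := (hX' i hi).1 h; omega
      · exact .inr (mem_sdiff.1 (hgY ((hg' j hj).2 (by omega)))).2
  have hnodup : (a :: la ++ lb).Nodup := List.nodup_append.2 ⟨hla, hlb,
    fun x hx y hy hxy => mem_compl.1 ((hmemB y).1 hy) (hxy ▸ (hmemA x).1 hx)⟩
  refine ⟨a, w, p, (Walk.IsPath.mk' (hp.nodup_iff.2 hnodup)).isHamiltonian_of_mem fun v => ?_⟩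
  rw [hp.mem_iff, List.mem_append, hmemA, hmemB, mem_compl]
  exact em _

theorem IsMaximumIndepSet.card_edgeFinset_lt_of_card_lt (hA : G.IsMaximumIndepSet A)
    (h : G.CliqueFree 3) (hn : 8 ≤ Fintype.card V) (hα : #A < (Fintype.card V + 1) / 2) :
    #G.edgeFinset < (Fintype.card V / 2 - 1) * ((Fintype.card V + 1) / 2 + 1) := by
  have hAc := card_add_card_compl A
  obtain ⟨k, hk⟩ : ∃ k, Fintype.card V / 2 = k + 1 := ⟨Fintype.card V / 2 - 1, by omega⟩
  rw [hk, Nat.add_sub_cancel]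
  rcases Nat.lt_or_ge #A (k + 1) with hα' | hα'
  · have := calc 2 * #G.edgeFinset
        _ ≤ Fintype.card V * #A := hA.two_mul_card_edgeFinset_le h
        _ ≤ Fintype.card V * k := Nat.mul_le_mul_left _ (by omega)
        _ < 2 * ((Fintype.card V + 1) / 2 + 1) * k :=
          Nat.mul_lt_mul_of_pos_right (by omega) (by omega)
    linarith
  · have := hA.two_mul_card_edgeFinset_lt h (by omega) (by omega)
    rw [show Fintype.card V = 2 * k + 3 by omega, show #A = k + 1 by omega] at this
    rw [show (Fintype.card V + 1) / 2 = k + 2 by omega]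
    nlinarith [show 3 ≤ k by omega]

theorem IsMaximumIndepSet.card_edgeFinset_lt_of_card_eq (hA : G.IsMaximumIndepSet A)
    (h : G.CliqueFree 3) (hn : 8 ≤ Fintype.card V) (hα : #A = (Fintype.card V + 1) / 2)
    (hnt : ¬ ∃ (u w : V) (p : G.Walk u w), p.IsHamiltonian) :
    #G.edgeFinset < (Fintype.card V / 2 - 1) * ((Fintype.card V + 1) / 2 + 1) := by
  by_contra! hE
  have hAc := card_add_card_compl A
  obtain ⟨k, hk⟩ : ∃ k, Fintype.card V / 2 = k + 1 := ⟨Fintype.card V / 2 - 1, by omega⟩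
  have hβ : #Aᶜ = k + 1 := by omega
  rw [hk, Nat.add_sub_cancel, ← hα] at hE
  have hB : G.IsIndepSet (Aᶜ : Finset V) := fun b₁ hb₁ b₂ hb₂ _ hb => by
    have := hA.two_mul_card_edgeFinset_add_card_le_of_adj h hb₁ hb₂ hb
    rw [hβ] at this
    nlinarith [show 3 ≤ k by omega, show #A ≤ k + 2 by omega]
  have hmiss := hA.isIndepSet.card_edgeFinset_add_sum_card_sdiff hB
  rw [hβ] at hmiss
  exact hnt (exists_isHamiltonian_of_sum_card_sdiff_le_two (A := A) (by omega) (by omega)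
    (by omega) (by nlinarith [show #A ≤ k + 2 by omega]))

end SimpleGraph

/-- For `n ≥ 8`, an `n`-vertex triangle-free graph that is not traceable has at most
`e(K_{⌊n/2⌋-1,⌈n/2⌉+1})` edges (that is, `n²/4 - 1` edges for even `n` and `(n²-9)/4`
edges for odd `n`), and `K_{⌊n/2⌋-1,⌈n/2⌉+1}` is the unique extremal graph. -/
theorem triangleFree_not_traceable_edge_bound
    {V : Type} [Fintype V] [DecidableEq V]
    (G : SimpleGraph V) [DecidableRel G.Adj] (n : ℕ)
    (hn : 8 ≤ n) (hcard : Fintype.card V = n)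
    (hfree : G.CliqueFree 3)
    (hnt : ¬ ∃ (u w : V) (p : G.Walk u w), p.IsHamiltonian) :
    G.edgeFinset.card ≤ (n / 2 - 1) * ((n + 1) / 2 + 1) ∧
    (Even n → G.edgeFinset.card ≤ n ^ 2 / 4 - 1) ∧
    (Odd n → G.edgeFinset.card ≤ (n ^ 2 - 9) / 4) ∧
    (G.edgeFinset.card = (n / 2 - 1) * ((n + 1) / 2 + 1) →
      Nonempty (G ≃g
        completeBipartiteGraph (Fin (n / 2 - 1)) (Fin ((n + 1) / 2 + 1)))) := by
  subst hcard
  obtain ⟨A, hA⟩ := G.maximumIndepSet_exists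
  have hAc := card_add_card_compl A
  have hcases : #G.edgeFinset < (Fintype.card V / 2 - 1) * ((Fintype.card V + 1) / 2 + 1) ∨
      (Fintype.card V + 1) / 2 + 1 ≤ #A := by
    rcases lt_trichotomy #A ((Fintype.card V + 1) / 2) with hα | hα | hα
    · exact .inl (hA.card_edgeFinset_lt_of_card_lt hfree hn hα)
    · exact .inl (hA.card_edgeFinset_lt_of_card_eq hfree hn hα hnt)
    · exact .inr hα
  have hle : #G.edgeFinset ≤ (Fintype.card V / 2 - 1) * ((Fintype.card V + 1) / 2 + 1) :=
    hcases.elim le_of_lt fun hα =>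
      (hA.card_edgeFinset_le_mul hfree).trans (Nat.mul_le_div_two_sub_one_mul hAc hα).1
  refine ⟨hle, fun he => Nat.div_two_sub_one_mul_of_even he ▸ hle,
    fun ho => Nat.div_two_sub_one_mul_of_odd ho ▸ hle, fun hE => ?_⟩
  obtain hlt | hα := hcases
  · exact absurd hE hlt.ne
  have hprod := Nat.mul_le_div_two_sub_one_mul hAc hα
  have hmul := (hA.card_edgeFinset_le_mul hfree).antisymm (hE ▸ hprod.1)
  have hβ := hprod.2 (hmul.symm.trans hE)
  obtain ⟨e⟩ := SimpleGraph.nonempty_iso_completeBipartiteGraph_of_neighborFinset_eq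
    hA.isIndepSet (hA.neighborFinset_eq_of_card_edgeFinset_eq hfree hmul)
  rw [hβ, show #A = (Fintype.card V + 1) / 2 + 1 by omega] at e
  exact ⟨e⟩
end

section
/- Let n ≥ 3. If G is an n-vertex triangle-free graph that is not Hamiltonian, then e(G) ≤ e(K_{⌈n/2⌉-1, ⌊n/2⌋+1}) = (⌈n/2⌉-1)(⌊n/2⌋+1), which equals ⌊n²/4⌋ for odd n and n²/4 - 1 for even n. -/
open SimpleGraph Finset

/-- path k, k+1, ..., n-1 in turanGraph n 2 -/
def tpath (n : ℕ) : (k : ℕ) → (hk : k < n) → (turanGraph n 2).Walk ⟨k, hk⟩ ⟨n - 1, by omega⟩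
  | k, hk =>
    if h : k = n - 1 then
      (Walk.nil' ⟨n-1, by omega⟩).copy (by simp [h]) rfl
    else
      Walk.cons (by show (k : ℕ) % 2 ≠ (k+1 : ℕ) % 2 ; omega : (turanGraph n 2).Adj ⟨k, hk⟩ ⟨k+1, by omega⟩)
        (tpath n (k+1) (by omega))
  termination_by k hk => n - k

lemma tpath_support (n : ℕ) : ∀ k (hk : k < n),
    (tpath n k hk).support.map Fin.val = List.range' k (n - k)
  | k, hk => by
    rw [tpath]
    split
    · next h =>
      have : n - k = 1 := by omega
      subst h
      simp only [Walk.support_copy, Walk.support_nil, List.map_cons, List.map_nil, this]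
      rfl
    · next h =>
      rw [Walk.support_cons, List.map_cons, tpath_support n (k+1) (by omega)]
      have : n - k = (n - (k+1)) + 1 := by omega
      rw [this, List.range'_succ]
  termination_by k hk => n - k

lemma tpath_edges (n : ℕ) (hn : 3 ≤ n) : ∀ k (hk : k < n),
    s((⟨n-1, by omega⟩ : Fin n), (⟨0, by omega⟩ : Fin n)) ∉ (tpath n k hk).edges
  | k, hk => by
    rw [tpath]
    split
    · simp
    · next h =>
      rw [Walk.edges_cons, List.mem_cons]
      push_neg
      refine ⟨?_, tpath_edges n hn (k+1) (by omega)⟩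
      intro heq
      rcases Sym2.eq_iff.1 heq with ⟨h1, h2⟩ | ⟨h1, h2⟩ <;>
      · have e1 := congrArg Fin.val h1
        have e2 := congrArg Fin.val h2
        simp only [Fin.val_mk] at e1 e2
        omega
  termination_by k hk => n - k

lemma turan2_hamiltonian (n : ℕ) (hn : 3 ≤ n) (hev : Even n) :
    (turanGraph n 2).IsHamiltonian := by
  intro _
  have h0 : (0 : ℕ) < n := by omega
  have hadj : (turanGraph n 2).Adj ⟨n-1, by omega⟩ ⟨0, h0⟩ := by
    show (n-1) % 2 ≠ 0 % 2
    obtain ⟨m, rfl⟩ := hev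
    omega
  refine ⟨⟨n-1, by omega⟩, Walk.cons hadj (tpath n 0 h0), ?_⟩
  have hsup := tpath_support n 0 h0
  have hnodup : (tpath n 0 h0).support.Nodup := by
    have := (List.nodup_range' (s := 0) (n := n - 0) (step := 1) one_pos)
    rw [← hsup] at this
    exact this.of_map _
  have hpath : (tpath n 0 h0).IsPath := Walk.IsPath.mk' hnodup
  have hmem : ∀ w : Fin n, w ∈ (tpath n 0 h0).support := by
    intro w
    have : (w : ℕ) ∈ List.range' 0 (n - 0) := by
      rw [List.mem_range'_1]
      omega
    rw [← hsup] at this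
    obtain ⟨b, hb, hbv⟩ := List.mem_map.1 this
    rwa [← Fin.val_injective hbv]
  constructor
  · exact (Walk.cons_isCycle_iff _ hadj).2 ⟨hpath, tpath_edges n hn 0 h0⟩
  · show (Walk.cons hadj (tpath n 0 h0)).tail.IsHamiltonian
    rw [Walk.tail_cons]
    intro a
    exact (congrArg (List.count a) (Walk.support_copy _ _ _)).trans (hpath.isHamiltonian_of_mem hmem a)

lemma count_odd_range (n : ℕ) : #((Finset.range n).filter (fun i => i % 2 = 1)) = n / 2 := by
  induction n with
  | zero => simp
  | succ n ih =>
    rw [Finset.range_add_one, Finset.filter_insert]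
    split
    · rw [Finset.card_insert_of_notMem (by simp), ih]
      omega
    · rw [ih]
      omega

lemma card_filter_fin (n : ℕ) (p : ℕ → Prop) [DecidablePred p] :
    #((univ : Finset (Fin n)).filter (fun w => p w.val)) = #((Finset.range n).filter p) := by
  rw [Finset.card_filter, Finset.card_filter]
  exact Fin.sum_univ_eq_sum_range (fun i => if p i then 1 else 0) n

lemma turan2_card (n : ℕ) : (turanGraph n 2).edgeFinset.card = (n+1)/2 * (n/2) := by
  have hds := SimpleGraph.sum_degrees_eq_twice_card_edges (turanGraph n 2)
  have hdeg : ∀ v : Fin n, (turanGraph n 2).degree v =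
      if (v : ℕ) % 2 = 1 then n - n/2 else n/2 := by
    intro v
    rw [← SimpleGraph.card_neighborFinset_eq_degree, SimpleGraph.neighborFinset_eq_filter]
    split
    · next h =>
      have : ∀ w : Fin n, (turanGraph n 2).Adj v w ↔ (w : ℕ) % 2 = 0 := by
        intro w; show (v : ℕ) % 2 ≠ (w : ℕ) % 2 ↔ _; omega
      rw [Finset.filter_congr (fun w _ => this w), card_filter_fin n (fun i => i % 2 = 0)]
      have := count_odd_range n
      have h2 := Finset.card_filter_add_card_filter_not (s := Finset.range n)
        (p := fun i => i % 2 = 1)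
      simp only [Finset.card_range] at h2
      have : #((Finset.range n).filter (fun i => ¬ i % 2 = 1)) = n - n/2 := by omega
      rw [← this]
      congr 1
      apply Finset.filter_congr
      intro i _
      constructor <;> omega
    · next h =>
      have : ∀ w : Fin n, (turanGraph n 2).Adj v w ↔ (w : ℕ) % 2 = 1 := by
        intro w; show (v : ℕ) % 2 ≠ (w : ℕ) % 2 ↔ _; omega
      rw [Finset.filter_congr (fun w _ => this w), card_filter_fin n (fun i => i % 2 = 1),
        count_odd_range]
  rw [Finset.sum_congr rfl (fun v _ => hdeg v)] at hds
  rw [Finset.sum_ite, Finset.sum_const, Finset.sum_const] at hds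
  rw [card_filter_fin n (fun i => i % 2 = 1), count_odd_range] at hds
  have hc2 : #((univ : Finset (Fin n)).filter (fun v : Fin n => ¬ (v:ℕ) % 2 = 1)) = n - n/2 := by
    have h2 := Finset.card_filter_add_card_filter_not (s := (univ : Finset (Fin n)))
      (p := fun v : Fin n => (v:ℕ) % 2 = 1)
    rw [card_filter_fin n (fun i => i % 2 = 1), count_odd_range, Finset.card_univ,
      Fintype.card_fin] at h2
    omega
  rw [hc2] at hds
  simp only [smul_eq_mul] at hds
  have key : n / 2 * (n - n / 2) + (n - n / 2) * (n / 2) = 2 * ((n+1)/2 * (n/2)) := by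
    have e1 : n - n/2 = (n+1)/2 := by omega
    rw [e1, Nat.mul_comm (n/2)]
    ring
  omega



/-- Theorem 6.2: for `n ≥ 3`, an `n`-vertex triangle-free graph that is not Hamiltonian
has at most `e(K_{⌈n/2⌉-1,⌊n/2⌋+1}) = (⌈n/2⌉-1)(⌊n/2⌋+1)` edges, which equals `⌊n²/4⌋`
for odd `n` and `n²/4 - 1` for even `n`. -/
theorem triangleFree_not_hamiltonian_edge_bound
    {V : Type} [Fintype V] [DecidableEq V]
    (G : SimpleGraph V) [DecidableRel G.Adj] (n : ℕ)
    (hn : 3 ≤ n) (hcard : Fintype.card V = n)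
    (hfree : G.CliqueFree 3)
    (hnh : ¬ G.IsHamiltonian) :
    G.edgeFinset.card ≤ ((n + 1) / 2 - 1) * (n / 2 + 1) ∧
    (Odd n → ((n + 1) / 2 - 1) * (n / 2 + 1) = n ^ 2 / 4) ∧
    (Even n → ((n + 1) / 2 - 1) * (n / 2 + 1) = n ^ 2 / 4 - 1) := by
  obtain ⟨H, hdec, hH⟩ := SimpleGraph.exists_isTuranMaximal (V := V) (r := 2) two_pos
  have hGH : G.edgeFinset.card ≤ H.edgeFinset.card := hH.2 hfree
  obtain ⟨f⟩ := hH.nonempty_iso_turanGraph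
  rw [hcard] at f
  have hHcard : H.edgeFinset.card = (n + 1) / 2 * (n / 2) :=
    f.card_edgeFinset_eq.trans (turan2_card n)
  have hT : G.edgeFinset.card ≤ (n + 1) / 2 * (n / 2) := hGH.trans_eq hHcard
  refine ⟨?_, ?_, ?_⟩
  · rcases Nat.even_or_odd n with hev | hodd
    · -- even case: strict inequality needed
      have hne : G.edgeFinset.card ≠ (n + 1) / 2 * (n / 2) := by
        intro heq
        have htm : G.IsTuranMaximal 2 := by
          refine ⟨hfree, fun ⦃H'⦄ _ hcf => (hH.2 hcf).trans ?_⟩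
          rw [hHcard, ← heq]
        obtain ⟨g⟩ := htm.nonempty_iso_turanGraph
        rw [hcard] at g
        apply hnh
        intro _
        obtain ⟨a, p, hp⟩ := turan2_hamiltonian n hn hev
          (by rw [Fintype.card_fin]; omega)
        exact ⟨g.symm a, p.map g.symm.toHom, hp.map g.symm.bijective⟩
      have hlt : G.edgeFinset.card < (n + 1) / 2 * (n / 2) := lt_of_le_of_ne hT hne
      obtain ⟨m, rfl⟩ := hev
      obtain ⟨k, rfl⟩ : ∃ k, m = k + 2 := ⟨m - 2, by omega⟩
      have e1 : (k + 2 + (k + 2) + 1) / 2 - 1 = k + 1 := by omega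
      have e2 : (k + 2 + (k + 2)) / 2 + 1 = k + 3 := by omega
      have e3 : (k + 2 + (k + 2) + 1) / 2 * ((k + 2 + (k + 2)) / 2) = (k+2)*(k+2) := by
        have : (k + 2 + (k + 2) + 1) / 2 = k + 2 := by omega
        have h2 : (k + 2 + (k + 2)) / 2 = k + 2 := by omega
        rw [this, h2]
      rw [e1, e2]
      rw [e3] at hlt
      have : (k+2)*(k+2) = (k+1)*(k+3) + 1 := by ring
      rw [this] at hlt
      omega
    · obtain ⟨m, rfl⟩ := hodd
      have e1 : (2*m + 1 + 1) / 2 - 1 = m := by omega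
      have e2 : (2*m + 1) / 2 + 1 = m + 1 := by omega
      have e3 : (2*m + 1 + 1) / 2 * ((2*m + 1) / 2) = m * (m+1) := by
        have h1 : (2*m + 1 + 1) / 2 = m + 1 := by omega
        have h2 : (2*m + 1) / 2 = m := by omega
        rw [h1, h2, Nat.mul_comm]
      rw [e1, e2]
      rw [e3] at hT
      exact hT
  · rintro ⟨m, rfl⟩
    have e1 : (2*m + 1 + 1) / 2 - 1 = m := by omega
    have e2 : (2*m + 1) / 2 + 1 = m + 1 := by omega
    rw [e1, e2]
    have e3 : (2*m + 1) ^ 2 = 4 * (m * (m+1)) + 1 := by ring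
    rw [e3]
    generalize m * (m + 1) = K
    omega
  · rintro ⟨m, rfl⟩
    have hm : 2 ≤ m := by omega
    have e1 : (m + m + 1) / 2 - 1 = m - 1 := by omega
    have e2 : (m + m) / 2 + 1 = m + 1 := by omega
    rw [e1, e2]
    obtain ⟨k, rfl⟩ : ∃ k, m = k + 2 := ⟨m - 2, by omega⟩
    have e3 : (k + 2 + (k + 2)) ^ 2 = 4 * ((k+1) * (k+3)) + 4 := by ring
    have e4 : (k + 2 - 1) * (k + 2 + 1) = (k+1) * (k+3) := by
      congr 1
    rw [e3, e4]
    generalize (k+1) * (k+3) = K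
    omega
end

section
/- Deleting any single edge from the complete bipartite graph K_{(n-1)/2,(n+1)/2} (n odd, n ≥ 5) yields a traceable graph. -/
open SimpleGraph

section Aux

variable {V : Type*}

/-- Alternating list `[g m, f (m-1), g (m-1), ..., f 0, g 0]`. -/
def altList (f g : ℕ → V) : ℕ → List V
  | 0 => [g 0]
  | (m+1) => g (m+1) :: f m :: altList f g m

lemma altList_ne_nil (f g : ℕ → V) (m : ℕ) : altList f g m ≠ [] := by
  cases m <;> simp [altList]

lemma altList_head? (f g : ℕ → V) (m : ℕ) : (altList f g m).head? = some (g m) := by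
  cases m <;> rfl

lemma altList_length (f g : ℕ → V) (m : ℕ) : (altList f g m).length = 2*m + 1 := by
  induction m with
  | zero => simp [altList]
  | succ k ih => simp [altList, ih]; omega

lemma altList_chain' (R : V → V → Prop) (f g : ℕ → V) (m : ℕ)
    (h1 : ∀ k < m, R (g (k+1)) (f k)) (h2 : ∀ k < m, R (f k) (g k)) :
    (altList f g m).Chain' R := by
  induction m with
  | zero => exact List.isChain_singleton _
  | succ k ih =>
    rw [altList]
    unfold List.Chain'
    rw [List.isChain_cons_cons, List.isChain_cons]
    refine ⟨h1 k (by omega), ?_,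
      ih (fun j hj => h1 j (by omega)) (fun j hj => h2 j (by omega))⟩
    intro z hz
    rw [altList_head?] at hz
    simp only [Option.mem_some_iff] at hz
    subst hz
    exact h2 k (by omega)

lemma altList_mem_g (f g : ℕ → V) (m : ℕ) : ∀ k ≤ m, g k ∈ altList f g m := by
  induction m with
  | zero => intro k hk; interval_cases k; simp [altList]
  | succ j ih =>
    intro k hk
    rcases Nat.eq_or_lt_of_le hk with h | h
    · subst h; simp [altList]
    · simp [altList]; right; right; exact ih k (by omega)

lemma altList_mem_f (f g : ℕ → V) (m : ℕ) : ∀ k < m, f k ∈ altList f g m := by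
  induction m with
  | zero => omega
  | succ j ih =>
    intro k hk
    rcases Nat.eq_or_lt_of_le (Nat.lt_succ_iff.mp hk) with h | h
    · subst h; simp [altList]
    · simp [altList]; right; right; exact ih k h

lemma walk_of_chain' {G : SimpleGraph V} :
    ∀ l : List V, l ≠ [] → l.Chain' G.Adj → ∃ u w, ∃ p : G.Walk u w, p.support = l := by
  intro l
  induction l with
  | nil => intro h; exact absurd rfl h
  | cons v t ih =>
    intro _ hc
    cases t with
    | nil => exact ⟨v, v, Walk.nil, rfl⟩
    | cons w s =>
      obtain ⟨hvw, hc'⟩ := List.isChain_cons_cons.mp hc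
      obtain ⟨u', w', p, hp⟩ := ih (by simp) hc'
      have hu : u' = w := by
        have h := p.support_eq_cons
        rw [hp] at h
        exact (List.cons.injEq _ _ _ _ ▸ h).1.symm
      subst hu
      exact ⟨v, w', Walk.cons hvw p, by simp [hp]⟩

lemma nodup_of_full {α : Type*} [DecidableEq α] [Fintype α] (l : List α)
    (h : ∀ v, v ∈ l) (hl : l.length = Fintype.card α) : l.Nodup := by
  have h1 : l.toFinset = Finset.univ := by
    apply Finset.eq_univ_of_forall; intro v; simpa using h v
  have h2 : l.toFinset.card = l.length := by
    rw [h1, hl, Finset.card_univ]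
  exact Multiset.coe_nodup.mp (Multiset.toFinset_card_eq_card_iff_nodup.mp (by simpa using h2))

end Aux

lemma key (a : ℕ) (ha : 2 ≤ a) (x : Fin a) (y : Fin (a+1)) :
    ∃ u w, ∃ p : ((completeBipartiteGraph (Fin a) (Fin (a+1))).deleteEdges
      {s(Sum.inl x, Sum.inr y)}).Walk u w, p.IsHamiltonian := by
  obtain ⟨one, hone⟩ : ∃ o : Fin a, o.val = 1 := ⟨⟨1, by omega⟩, rfl⟩
  set G := (completeBipartiteGraph (Fin a) (Fin (a+1))).deleteEdges {s(Sum.inl x, Sum.inr y)}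
    with hG
  set f : ℕ → Fin a ⊕ Fin (a+1) :=
    fun k => Sum.inl (Equiv.swap one x ⟨k % a, Nat.mod_lt _ (by omega)⟩) with hf
  set g : ℕ → Fin a ⊕ Fin (a+1) :=
    fun k => Sum.inr (Equiv.swap 0 y ⟨k % (a+1), Nat.mod_lt _ (by omega)⟩) with hg
  have hfx : ∀ k, f k = Sum.inl x → k % a = 1 := by
    intro k hk
    simp only [hf, Sum.inl.injEq] at hk
    have h2 : (⟨k % a, Nat.mod_lt _ (by omega)⟩ : Fin a) = one :=
      (Equiv.swap one x).injective (by rw [Equiv.swap_apply_left]; exact hk)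
    have := congrArg Fin.val h2
    simp only [hone] at this
    exact this
  have hgy : ∀ k, g k = Sum.inr y → k % (a+1) = 0 := by
    intro k hk
    simp only [hg, Sum.inr.injEq] at hk
    have h2 : (⟨k % (a+1), Nat.mod_lt _ (by omega)⟩ : Fin (a+1)) = 0 :=
      (Equiv.swap 0 y).injective (by rw [Equiv.swap_apply_left]; exact hk)
    have := congrArg Fin.val h2
    simpa using this
  have hadj : ∀ i j, f i ≠ Sum.inl x ∨ g j ≠ Sum.inr y → G.Adj (f i) (g j) := by
    intro i j h
    rw [hG, SimpleGraph.deleteEdges_adj]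
    constructor
    · simp [hf, hg]
    · simp only [Set.mem_singleton_iff, Sym2.eq, Sym2.rel_iff', Prod.mk.injEq,
        Prod.swap_prod_mk]
      rintro (⟨h1, h2⟩ | ⟨h1, h2⟩)
      · rcases h with h' | h'
        · exact h' h1
        · exact h' h2
      · exact absurd h1 (by simp [hf])
  have hchain : (altList f g a).Chain' G.Adj := by
    apply altList_chain'
    · intro k hk
      apply (SimpleGraph.adj_symm _)
      apply hadj
      by_cases hx : f k = Sum.inl x
      · right; intro hy
        have e1 := hfx k hx
        have e2 := hgy (k+1) hy
        have e3 : k % a = k := Nat.mod_eq_of_lt hk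
        have e4 : (k+1) % (a+1) = k+1 := Nat.mod_eq_of_lt (by omega)
        omega
      · left; exact hx
    · intro k hk
      apply hadj
      by_cases hx : f k = Sum.inl x
      · right; intro hy
        have e1 := hfx k hx
        have e2 := hgy k hy
        have e3 : k % a = k := Nat.mod_eq_of_lt hk
        have e4 : k % (a+1) = k := Nat.mod_eq_of_lt (by omega)
        omega
      · left; exact hx
  obtain ⟨u, w, p, hp⟩ := walk_of_chain' (altList f g a) (altList_ne_nil f g a) hchain
  refine ⟨u, w, p, ?_⟩
  have hmem : ∀ v, v ∈ altList f g a := by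
    intro v
    cases v with
    | inl i =>
      have h : f (Equiv.swap one x i).val = Sum.inl i := by
        simp [hf, Nat.mod_eq_of_lt (Equiv.swap one x i).isLt, Equiv.swap_apply_self]
      rw [← h]
      exact altList_mem_f f g a _ (Equiv.swap one x i).isLt
    | inr j =>
      have h : g (Equiv.swap 0 y j).val = Sum.inr j := by
        simp [hg, Nat.mod_eq_of_lt (Equiv.swap 0 y j).isLt, Equiv.swap_apply_self]
      rw [← h]
      exact altList_mem_g f g a _ (Nat.lt_succ_iff.mp (Equiv.swap 0 y j).isLt)
  have hnd : (altList f g a).Nodup := by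
    apply nodup_of_full _ hmem
    rw [altList_length]
    simp [Fintype.card_sum]
    omega
  intro v
  rw [hp]
  exact @List.count_eq_one_of_mem _ instBEqOfDecidableEq _ _ _ hnd (hmem v)

/-- For odd `n ≥ 5`, deleting any single edge from the complete bipartite graph
`K_{(n-1)/2,(n+1)/2}` yields a traceable graph. -/
theorem completeBipartite_deleteEdge_traceable (n : ℕ) (hn : 5 ≤ n) (hodd : Odd n) :
    ∀ e ∈ (completeBipartiteGraph (Fin ((n - 1) / 2)) (Fin ((n + 1) / 2))).edgeSet,
      ∃ (u w : Fin ((n - 1) / 2) ⊕ Fin ((n + 1) / 2))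
        (p : ((completeBipartiteGraph (Fin ((n - 1) / 2)) (Fin ((n + 1) / 2))).deleteEdges
          {e}).Walk u w), p.IsHamiltonian := by
  obtain ⟨m, rfl⟩ := hodd
  have h1 : (2 * m + 1 - 1) / 2 = m := by omega
  have h2 : (2 * m + 1 + 1) / 2 = m + 1 := by omega
  have hm : 2 ≤ m := by omega
  rw [h1, h2]
  intro e he
  induction e using Sym2.ind with
  | _ u v =>
    rw [SimpleGraph.mem_edgeSet] at he
    cases u with
    | inl i =>
      cases v with
      | inl i' => simp at he
      | inr j => exact key m hm i j
    | inr j =>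
      cases v with
      | inl i =>
        rw [Sym2.eq_swap]
        exact key m hm i j
      | inr j' => simp at he
end
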